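/- arXiv:1806.09874 — 8 statements merged into one kernel-verified Lean document; each statement's English description precedes it below -/
import Mathlib

section
/- Let f = g/h be a meromorphic modular form of weight k for SL(2,ℤ) which has at least one pole in ℍ, and let c : ℤ → ℂ and N ∈ ℤ be such that f(τ) = Σ_{n ≥ N} c(n) e^{2πinτ} (absolutely convergent) for every τ ∈ ℍ whose imaginary part exceeds the imaginary part of every pole of f. Let τ* be a pole of f in the vertical strip {τ ∈ ℍ : |Re τ| ≤ 1/2} whose imaginary part t := Im τ* is maximal among poles of f in that strip, and let p ≥ 1 be the maximal order among the poles of f with imaginary part equal to t. Then t ≥ √3/2, and there exists a constant C > 0 such that for every ε > 0 there are infinitely many positive integers n with C · n^{p−1} · e^{2πnt} ≤ |c(n)| ≤ e^{2πn(t+ε)}. -/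
open Complex Real Filter Topology

/-- A level-one holomorphic modular form of weight `k`: holomorphic on the upper
half-plane, 1-periodic, with the weight-`k` transformation under `τ ↦ -1/τ`,
and bounded as `Im τ → ∞`. -/
def IsModularForm (k : ℤ) (f : ℂ → ℂ) : Prop :=
  DifferentiableOn ℂ f {z : ℂ | 0 < z.im} ∧
  (∀ z : ℂ, 0 < z.im → f (z + 1) = f z) ∧
  (∀ z : ℂ, 0 < z.im → f (-z⁻¹) = z ^ k * f z) ∧
  ∃ C A : ℝ, ∀ z : ℂ, A < z.im → ‖f z‖ ≤ C

/-- `f` has a pole of order `p ≥ 1` at `z₀`: near `z₀` (but away from it),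
`f z = G z / (z - z₀)^p` with `G` analytic at `z₀` and `G z₀ ≠ 0`. -/
def IsPoleOfOrder (f : ℂ → ℂ) (z₀ : ℂ) (p : ℕ) : Prop :=
  0 < p ∧ ∃ G : ℂ → ℂ, AnalyticAt ℂ G z₀ ∧ G z₀ ≠ 0 ∧
    ∀ᶠ z in nhdsWithin z₀ {z₀}ᶜ, f z = G z / (z - z₀) ^ p

/-- `f` has a pole at `z₀`. -/
def IsPole (f : ℂ → ℂ) (z₀ : ℂ) : Prop := ∃ p : ℕ, IsPoleOfOrder f z₀ p

open scoped Nat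

/-! A pole `z₁` of order `p` at the maximal height `t` forces `‖f(z₁ + iy)‖ ≍ y⁻ᵖ` as `y → 0⁺`,
whereas `|f(z₁ + iy)| ≤ ∑ |c(n)| e^{-2πn(t+y)}`. If eventually `|c(n)| < C n^{p-1} e^{2πnt}`, then
trading `n^{p-1}` for half of the remaining decay `e^{-2πny}` bounds this sum by
`O(1) + C (p-1)! / (πy)^p`, which is too small once `C` is a small multiple of the leading
coefficient of the pole. The upper bound is just convergence of the expansion at height `t + ε`,
and `t ≥ √3/2` because `τ ↦ -1/τ` maps a pole with `|τ| < 1` to a higher one. -/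

theorem isPole_iff_meromorphicOrderAt_lt_zero {f : ℂ → ℂ} {z₀ : ℂ} :
    IsPole f z₀ ↔ meromorphicOrderAt f z₀ < 0 := by
  constructor
  · rintro ⟨p, hp, G, hG, hG0, hfG⟩
    have hmer : MeromorphicAt f z₀ :=
      (hG.meromorphicAt.div (by fun_prop : MeromorphicAt (fun z => (z - z₀) ^ p) z₀)).congr
        (hfG.mono fun z hz => hz.symm)
    have : meromorphicOrderAt f z₀ = ((-p : ℤ) : WithTop ℤ) := by
      rw [meromorphicOrderAt_eq_int_iff hmer]
      refine ⟨G, hG, hG0, hfG.mono fun z hz => ?_⟩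
      rw [hz, zpow_neg, zpow_natCast, smul_eq_mul, div_eq_inv_mul]
    rw [this]
    exact_mod_cast (by omega : -(p : ℤ) < 0)
  · intro hneg
    have hmer := meromorphicAt_of_meromorphicOrderAt_ne_zero hneg.ne
    obtain ⟨n, hn⟩ := WithTop.ne_top_iff_exists.1 (ne_top_of_lt hneg)
    rw [← hn] at hneg
    have hn0 : n < 0 := by exact_mod_cast hneg
    obtain ⟨G, hG, hG0, hfG⟩ := (meromorphicOrderAt_eq_int_iff hmer).1 hn.symm
    refine ⟨(-n).toNat, by omega, G, hG, hG0, hfG.mono fun z hz => ?_⟩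
    rw [hz, smul_eq_mul, div_eq_inv_mul, ← zpow_natCast, Int.toNat_of_nonneg (by omega), zpow_neg,
      inv_inv]

theorem IsPoleOfOrder.exists_tendsto_norm_mul {f : ℂ → ℂ} {z₀ : ℂ} {p : ℕ}
    (hp : IsPoleOfOrder f z₀ p) :
    ∃ L, 0 < L ∧ Tendsto (fun z => ‖z - z₀‖ ^ p * ‖f z‖) (𝓝[≠] z₀) (𝓝 L) := by
  obtain ⟨-, G, hG, hG0, hfG⟩ := hp
  refine ⟨‖G z₀‖, norm_pos_iff.2 hG0, ?_⟩
  refine (hG.continuousAt.norm.tendsto.mono_left nhdsWithin_le_nhds).congr' ?_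
  filter_upwards [hfG, self_mem_nhdsWithin] with z hz hne
  have : ‖z - z₀‖ ^ p ≠ 0 := pow_ne_zero _ (norm_ne_zero_iff.2 (sub_ne_zero.2 hne))
  rw [hz, norm_div, norm_pow, mul_div_cancel₀ _ this]

theorem IsPoleOfOrder.exists_tendsto_pow_mul_norm_add_mul_I {f : ℂ → ℂ} {z₀ : ℂ} {p : ℕ}
    (hp : IsPoleOfOrder f z₀ p) :
    ∃ L, 0 < L ∧ Tendsto (fun y : ℝ => y ^ p * ‖f (z₀ + y * I)‖) (𝓝[>] 0) (𝓝 L) := by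
  obtain ⟨L, hL, hlim⟩ := hp.exists_tendsto_norm_mul
  have hvert : Tendsto (fun y : ℝ => z₀ + y * I) (𝓝[>] 0) (𝓝[≠] z₀) := by
    refine tendsto_nhdsWithin_iff.2 ⟨?_, ?_⟩
    · have : Continuous fun y : ℝ => z₀ + y * I := by fun_prop
      simpa using (this.tendsto 0).mono_left nhdsWithin_le_nhds
    · filter_upwards [self_mem_nhdsWithin] with y (hy : 0 < y)
      simpa using hy.ne'
  refine ⟨L, hL, (hlim.comp hvert).congr' ?_⟩
  filter_upwards [self_mem_nhdsWithin] with y (hy : 0 < y)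
  simp [abs_of_pos hy]

theorem meromorphicOrderAt_add_one {f : ℂ → ℂ} (hper : ∀ z : ℂ, 0 < z.im → f (z + 1) = f z)
    {z : ℂ} (hz : 0 < z.im) : meromorphicOrderAt f (z + 1) = meromorphicOrderAt f z := by
  rw [← meromorphicOrderAt_comp_add_const_eq_meromorphicOrderAt]
  refine meromorphicOrderAt_congr (eventually_nhdsWithin_of_eventually_nhds ?_)
  filter_upwards [UpperHalfPlane.isOpen_upperHalfPlaneSet.mem_nhds hz] with w hw using hper w hw

theorem meromorphicOrderAt_add_int {f : ℂ → ℂ} (hper : ∀ z : ℂ, 0 < z.im → f (z + 1) = f z)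
    (n : ℤ) {z : ℂ} (hz : 0 < z.im) : meromorphicOrderAt f (z + n) = meromorphicOrderAt f z := by
  induction n using Int.induction_on generalizing z with
  | zero => simp
  | succ n ih =>
    rw [Int.cast_add, Int.cast_one, ← add_assoc, meromorphicOrderAt_add_one hper (by simpa), ih hz]
  | pred n ih =>
    rw [← ih hz, ← meromorphicOrderAt_add_one hper (by simpa)]
    push_cast
    ring_nf

theorem meromorphicOrderAt_neg_inv {f : ℂ → ℂ} {k : ℤ}
    (hS : ∀ z : ℂ, 0 < z.im → f (-z⁻¹) = z ^ k * f z) {z : ℂ} (hz : 0 < z.im) :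
    meromorphicOrderAt f (-z⁻¹) = meromorphicOrderAt f z := by
  have hz0 : z ≠ 0 := fun h => by simp [h] at hz
  have hφ : AnalyticAt ℂ (fun w : ℂ => -w⁻¹) z := by fun_prop (disch := exact hz0)
  have hφ' : deriv (fun w : ℂ => -w⁻¹) z ≠ 0 := by simp [hz0]
  rw [← meromorphicOrderAt_comp_of_deriv_ne_zero hφ hφ',
    ← meromorphicOrderAt_mul_of_ne_zero (f := f) (analyticAt_id.zpow hz0) (zpow_ne_zero k hz0)]
  refine meromorphicOrderAt_congr (eventually_nhdsWithin_of_eventually_nhds ?_)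
  filter_upwards [UpperHalfPlane.isOpen_upperHalfPlaneSet.mem_nhds hz] with w hw using hS w hw

namespace IsModularForm

variable {k₁ k₂ : ℤ} {g h : ℂ → ℂ}

theorem div_add_one (hg : IsModularForm k₁ g) (hh : IsModularForm k₂ h) {z : ℂ} (hz : 0 < z.im) :
    (g / h) (z + 1) = (g / h) z := by
  simp only [Pi.div_apply, hg.2.1 z hz, hh.2.1 z hz]

theorem div_neg_inv (hg : IsModularForm k₁ g) (hh : IsModularForm k₂ h) {z : ℂ} (hz : 0 < z.im) :
    (g / h) (-z⁻¹) = z ^ (k₁ - k₂) * (g / h) z := by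
  have hz0 : z ≠ 0 := fun h => by simp [h] at hz
  simp only [Pi.div_apply, hg.2.2.1 z hz, hh.2.2.1 z hz, zpow_sub₀ hz0]
  field_simp

end IsModularForm

theorem im_le_of_isPole {f : ℂ → ℂ} (hper : ∀ z : ℂ, 0 < z.im → f (z + 1) = f z) {t : ℝ}
    (hstrip : ∀ z : ℂ, 0 < z.im → |z.re| ≤ 1 / 2 → IsPole f z → z.im ≤ t)
    {z : ℂ} (hz : 0 < z.im) (hpole : IsPole f z) : z.im ≤ t := by
  have hshift : IsPole f (z + ((-round z.re : ℤ) : ℂ)) := by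
    rwa [isPole_iff_meromorphicOrderAt_lt_zero, meromorphicOrderAt_add_int hper _ hz,
      ← isPole_iff_meromorphicOrderAt_lt_zero]
  simpa using hstrip _ (by simpa using hz) (by simpa [← sub_eq_add_neg] using abs_sub_round z.re)
    hshift

theorem sqrt_three_div_two_le_im {f : ℂ → ℂ} {k : ℤ}
    (hS : ∀ z : ℂ, 0 < z.im → f (-z⁻¹) = z ^ k * f z) {τ : ℂ} (hτ : 0 < τ.im)
    (hre : |τ.re| ≤ 1 / 2) (hpole : IsPole f τ)
    (hmax : ∀ z : ℂ, 0 < z.im → IsPole f z → z.im ≤ τ.im) : √3 / 2 ≤ τ.im := by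
  have hnormSq : 0 < normSq τ := normSq_pos.2 fun h => by simp [h] at hτ
  have him : (-τ⁻¹).im = τ.im / normSq τ := by simp [neg_div]
  have hpole' : IsPole f (-τ⁻¹) := by
    rwa [isPole_iff_meromorphicOrderAt_lt_zero, meromorphicOrderAt_neg_inv hS hτ,
      ← isPole_iff_meromorphicOrderAt_lt_zero]
  have h1 : 1 ≤ normSq τ := by
    have := hmax _ (by rw [him]; positivity) hpole'
    rw [him, div_le_iff₀ hnormSq] at this
    nlinarith
  rw [normSq_apply] at h1
  have hre2 : τ.re * τ.re ≤ 1 / 4 := by nlinarith [abs_le.1 hre]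
  rw [div_le_iff₀ two_pos, Real.sqrt_le_left (by positivity)]
  nlinarith

theorem norm_mul_cexp_two_pi_I_mul (c : ℂ) (m : ℤ) (τ : ℂ) :
    ‖c * cexp (2 * π * I * m * τ)‖ = ‖c‖ * rexp (-(2 * π * m * τ.im)) := by
  rw [norm_mul, Complex.norm_exp]
  congr 2
  simp [mul_re, mul_im]

theorem summable_and_norm_le_of_fourier_series {c : ℤ → ℂ} {N : ℤ} {τ F : ℂ}
    (h : Summable (fun n : ℕ => ‖c (N + n) * cexp (2 * π * I * ((N : ℂ) + n) * τ)‖) ∧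
      F = ∑' n : ℕ, c (N + n) * cexp (2 * π * I * ((N : ℂ) + n) * τ)) :
    Summable (fun n : ℕ => ‖c (N + n)‖ * rexp (-(2 * π * (N + n : ℤ) * τ.im))) ∧
      ‖F‖ ≤ ∑' n : ℕ, ‖c (N + n)‖ * rexp (-(2 * π * (N + n : ℤ) * τ.im)) := by
  obtain ⟨hs, rfl⟩ := h
  have hterm (n : ℕ) : ‖c (N + n) * cexp (2 * π * I * ((N : ℂ) + n) * τ)‖ =
      ‖c (N + n)‖ * rexp (-(2 * π * (N + n : ℤ) * τ.im)) := by
    exact_mod_cast norm_mul_cexp_two_pi_I_mul (c (N + n)) (N + n) τ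
  exact ⟨by simpa only [hterm] using hs, (norm_tsum_le_tsum_norm hs).trans_eq (tsum_congr hterm)⟩

theorem summable_and_tsum_pow_mul_exp_le {x : ℝ} (hx : 0 < x) (q k : ℕ) :
    Summable (fun i : ℕ => ((i + k + 1 : ℕ) : ℝ) ^ q * rexp (-(2 * x * (i + k + 1 : ℕ)))) ∧
    ∑' i : ℕ, ((i + k + 1 : ℕ) : ℝ) ^ q * rexp (-(2 * x * (i + k + 1 : ℕ))) ≤
      q ! / x ^ (q + 1) := by
  set r := rexp (-x)
  have hr0 : 0 ≤ r := (Real.exp_pos _).le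
  have hr1 : r < 1 := Real.exp_lt_one_iff.2 (by linarith)
  have hgeom := (summable_geometric_of_lt_one hr0 hr1).mul_left (q ! / x ^ q * r)
  have hle : ∀ i : ℕ, ((i + k + 1 : ℕ) : ℝ) ^ q * rexp (-(2 * x * (i + k + 1 : ℕ))) ≤
      q ! / x ^ q * r * r ^ i := by
    intro i
    set m : ℝ := ((i + k + 1 : ℕ) : ℝ)
    have hm : (i : ℝ) + 1 ≤ m := by simp [m]
    have hpow : m ^ q ≤ q ! * rexp (x * m) / x ^ q := by
      rw [le_div_iff₀ (by positivity), ← mul_pow, mul_comm m x, ← div_le_iff₀' (by positivity)]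
      exact Real.pow_div_factorial_le_exp (x := x * m) (by positivity) q
    calc m ^ q * rexp (-(2 * x * m))
        ≤ q ! * rexp (x * m) / x ^ q * rexp (-(2 * x * m)) := by gcongr
      _ = q ! / x ^ q * rexp (-(x * m)) := by
          rw [div_mul_eq_mul_div, mul_assoc, ← Real.exp_add]; ring_nf
      _ ≤ q ! / x ^ q * rexp (-(x * (i + 1))) := by gcongr
      _ = q ! / x ^ q * r * r ^ i := by
          rw [mul_assoc, ← Real.exp_nat_mul, ← Real.exp_add]; ring_nf
  have hsum := Summable.of_nonneg_of_le (fun i => by positivity) hle hgeom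
  refine ⟨hsum, (hsum.tsum_le_tsum hle hgeom).trans ?_⟩
  rw [tsum_mul_left, tsum_geometric_of_lt_one hr0 hr1]
  -- `r / (1 - r) = 1 / (e^x - 1) ≤ 1 / x`
  have hxr : x * r ≤ 1 - r := by
    have h := Real.add_one_le_exp x
    have hre : r * rexp x = 1 := by rw [← Real.exp_add]; simp
    nlinarith
  calc q ! / x ^ q * r * (1 - r)⁻¹ = q ! / x ^ q * (r / (1 - r)) := by ring
    _ ≤ q ! / x ^ q * (1 / x) := by
        refine mul_le_mul_of_nonneg_left ?_ (by positivity)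
        rw [div_le_div_iff₀ (by linarith) hx]
        linarith
    _ = q ! / x ^ (q + 1) := by rw [pow_succ]; ring

theorem exp_neg_mul_le_add_exp_neg_mul {m t σ : ℝ} (ht : t ≤ σ) (hσ : σ ≤ t + 1) :
    rexp (-(m * σ)) ≤ rexp (-(m * t)) + rexp (-(m * (t + 1))) := by
  rcases le_total 0 m with hm | hm
  · exact le_add_of_le_of_nonneg (Real.exp_le_exp.2 (by nlinarith)) (Real.exp_pos _).le
  · exact le_add_of_nonneg_of_le (Real.exp_pos _).le (Real.exp_le_exp.2 (by nlinarith))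

theorem tsum_le_of_eventually_le_pow_mul_exp {a : ℤ → ℝ} (ha : ∀ m, 0 ≤ a m) {N : ℤ}
    {t C : ℝ} (hC : 0 ≤ C) {q : ℕ}
    (hsum : ∀ σ, t < σ → Summable fun n : ℕ => a (N + n) * rexp (-(2 * π * (N + n : ℤ) * σ)))
    (hbound : ∀ᶠ n : ℕ in atTop, a n ≤ C * n ^ q * rexp (2 * π * n * t)) :
    ∃ B, ∀ y, 0 < y → y ≤ 1 →
      ∑' n : ℕ, a (N + n) * rexp (-(2 * π * (N + n : ℤ) * (t + y))) ≤
        B + C * q ! / (π * y) ^ (q + 1) := by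
  obtain ⟨n₁, hn₁⟩ := eventually_atTop.1 hbound
  set k := max n₁ N.toNat
  set j₀ := (k + 1 - N).toNat
  have hj₀ : ∀ i : ℕ, N + ((i + j₀ : ℕ) : ℤ) = ((i + k + 1 : ℕ) : ℤ) := by omega
  refine ⟨∑ n ∈ Finset.range j₀, a (N + n) *
    (rexp (-(2 * π * (N + n : ℤ) * t)) + rexp (-(2 * π * (N + n : ℤ) * (t + 1)))), ?_⟩
  intro y hy hy1
  have hs := hsum (t + y) (by linarith)
  rw [← hs.sum_add_tsum_nat_add j₀]
  refine add_le_add (Finset.sum_le_sum fun n _ => ?_) ?_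
  · exact mul_le_mul_of_nonneg_left
      (exp_neg_mul_le_add_exp_neg_mul (by linarith) (by linarith)) (ha _)
  · obtain ⟨hmaj, hmaj_le⟩ := summable_and_tsum_pow_mul_exp_le (mul_pos pi_pos hy) q k
    have hle : ∀ i : ℕ, a (N + ((i + j₀ : ℕ) : ℤ)) *
        rexp (-(2 * π * (N + ((i + j₀ : ℕ) : ℤ) : ℤ) * (t + y))) ≤
        C * (((i + k + 1 : ℕ) : ℝ) ^ q * rexp (-(2 * (π * y) * (i + k + 1 : ℕ)))) := by
      intro i
      rw [hj₀, Int.cast_natCast]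
      calc a ((i + k + 1 : ℕ) : ℤ) * rexp (-(2 * π * (i + k + 1 : ℕ) * (t + y)))
          ≤ C * ((i + k + 1 : ℕ) : ℝ) ^ q * rexp (2 * π * (i + k + 1 : ℕ) * t) *
              rexp (-(2 * π * (i + k + 1 : ℕ) * (t + y))) := by
            gcongr
            exact hn₁ _ (by omega)
        _ = C * (((i + k + 1 : ℕ) : ℝ) ^ q * rexp (-(2 * (π * y) * (i + k + 1 : ℕ)))) := by
            rw [mul_assoc, ← Real.exp_add]; ring_nf
    calc ∑' i : ℕ, a (N + ((i + j₀ : ℕ) : ℤ)) *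
          rexp (-(2 * π * (N + ((i + j₀ : ℕ) : ℤ) : ℤ) * (t + y)))
        ≤ ∑' i : ℕ, C * (((i + k + 1 : ℕ) : ℝ) ^ q * rexp (-(2 * (π * y) * (i + k + 1 : ℕ)))) :=
          ((summable_nat_add_iff j₀).2 hs).tsum_le_tsum hle (hmaj.mul_left C)
      _ ≤ C * q ! / (π * y) ^ (q + 1) := by
          rw [tsum_mul_left, mul_div_assoc]
          exact mul_le_mul_of_nonneg_left hmaj_le hC

theorem frequently_pow_mul_exp_le {a : ℤ → ℝ} (ha : ∀ m, 0 ≤ a m) {N : ℤ} {t C L : ℝ}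
    {q : ℕ} {F : ℝ → ℝ} (hC : 0 ≤ C) (hCL : C * q ! / π ^ (q + 1) < L)
    (hsum : ∀ σ, t < σ → Summable fun n : ℕ => a (N + n) * rexp (-(2 * π * (N + n : ℤ) * σ)))
    (hF : ∀ y, 0 < y → F y ≤ ∑' n : ℕ, a (N + n) * rexp (-(2 * π * (N + n : ℤ) * (t + y))))
    (hlim : Tendsto (fun y => y ^ (q + 1) * F y) (𝓝[>] 0) (𝓝 L)) :
    ∃ᶠ n : ℕ in atTop, C * n ^ q * rexp (2 * π * n * t) ≤ a n := by
  by_contra h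
  obtain ⟨B, hB⟩ := tsum_le_of_eventually_le_pow_mul_exp ha hC hsum
    ((not_frequently.1 h).mono fun n hn => (not_le.1 hn).le)
  have hmaj : Tendsto (fun y : ℝ => y ^ (q + 1) * B + C * q ! / π ^ (q + 1)) (𝓝[>] 0)
      (𝓝 (C * q ! / π ^ (q + 1))) := by
    have : Continuous fun y : ℝ => y ^ (q + 1) * B + C * q ! / π ^ (q + 1) := by fun_prop
    simpa using (this.tendsto 0).mono_left nhdsWithin_le_nhds
  refine hCL.not_ge (le_of_tendsto_of_tendsto hlim hmaj ?_)
  filter_upwards [Ioo_mem_nhdsGT one_pos] with y ⟨hy, hy1⟩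
  calc y ^ (q + 1) * F y ≤ y ^ (q + 1) * (B + C * q ! / (π * y) ^ (q + 1)) :=
        mul_le_mul_of_nonneg_left ((hF y hy).trans (hB y hy hy1.le)) (by positivity)
    _ = y ^ (q + 1) * B + C * q ! / π ^ (q + 1) := by
        field_simp
        ring

theorem eventually_le_exp_of_summable {a : ℤ → ℝ} {N : ℤ} {s : ℝ}
    (hsum : Summable fun n : ℕ => a (N + n) * rexp (-(2 * π * (N + n : ℤ) * s))) :
    ∀ᶠ n : ℕ in atTop, a n ≤ rexp (2 * π * n * s) := by
  obtain ⟨j₁, hj₁⟩ := eventually_atTop.1 (hsum.tendsto_atTop_zero.eventually (gt_mem_nhds one_pos))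
  refine eventually_atTop.2 ⟨j₁ + N.toNat, fun n hn => ?_⟩
  have h := hj₁ (n - N).toNat (by omega)
  rw [show N + ((n - N).toNat : ℤ) = n by omega, Int.cast_natCast, Real.exp_neg,
    ← div_eq_mul_inv, div_lt_one (Real.exp_pos _)] at h
  exact h.le

theorem stmt_0_general (k₁ k₂ : ℤ) (g h f : ℂ → ℂ)
    (hg : IsModularForm k₁ g) (hh : IsModularForm k₂ h)
    (hf : ∀ z : ℂ, f z = g z / h z)
    (c : ℤ → ℂ) (N : ℤ)
    (hfour : ∀ τ : ℂ, 0 < τ.im →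
      (∀ z : ℂ, 0 < z.im → IsPole f z → z.im < τ.im) →
      Summable (fun n : ℕ => ‖c (N + n) * Complex.exp (2 * π * I * ((N : ℂ) + n) * τ)‖) ∧
      f τ = ∑' n : ℕ, c (N + n) * Complex.exp (2 * π * I * ((N : ℂ) + n) * τ))
    (τstar : ℂ) (hτ1 : 0 < τstar.im) (hτ2 : IsPole f τstar)
    (hτ3 : |τstar.re| ≤ 1 / 2)
    (t : ℝ) (ht : t = τstar.im)
    (htmax : ∀ z : ℂ, 0 < z.im → |z.re| ≤ 1 / 2 → IsPole f z → z.im ≤ t)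
    (p : ℕ)
    (hpex : ∃ z : ℂ, 0 < z.im ∧ z.im = t ∧ IsPoleOfOrder f z p) :
    Real.sqrt 3 / 2 ≤ t ∧
    ∃ C : ℝ, 0 < C ∧ ∀ ε : ℝ, 0 < ε →
      {n : ℕ | 0 < n ∧
        C * (n : ℝ) ^ (p - 1) * Real.exp (2 * π * n * t) ≤ ‖c (n : ℤ)‖ ∧
        ‖c (n : ℤ)‖ ≤ Real.exp (2 * π * n * (t + ε))}.Infinite := by
  obtain rfl : f = g / h := funext hf
  have hpoles (z : ℂ) (hz : 0 < z.im) : IsPole (g / h) z → z.im ≤ t :=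
    im_le_of_isPole (fun w hw => hg.div_add_one hh hw) htmax hz
  subst ht
  refine ⟨sqrt_three_div_two_le_im (fun z hz => hg.div_neg_inv hh hz) hτ1 hτ3 hτ2 hpoles, ?_⟩
  have hfourier (τ : ℂ) (hτ : τstar.im < τ.im) :=
    summable_and_norm_le_of_fourier_series
      (hfour τ (hτ1.trans hτ) fun z hz hz' => (hpoles z hz hz').trans_lt hτ)
  have hsum (σ : ℝ) (hσ : τstar.im < σ) :
      Summable fun n : ℕ => ‖c (N + n)‖ * rexp (-(2 * π * (N + n : ℤ) * σ)) := by
    simpa using (hfourier (σ * I) (by simpa)).1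
  obtain ⟨z₁, -, hz₁t, hz₁⟩ := hpex
  obtain ⟨q, rfl⟩ : ∃ q, p = q + 1 := ⟨p - 1, by have := hz₁.1; omega⟩
  have hF (y : ℝ) (hy : 0 < y) :
      ‖(g / h) (z₁ + y * I)‖ ≤
        ∑' n : ℕ, ‖c (N + n)‖ * rexp (-(2 * π * (N + n : ℤ) * (τstar.im + y))) := by
    simpa [hz₁t] using (hfourier (z₁ + y * I) (by simp [hz₁t, hy])).2
  obtain ⟨L, hL, hlim⟩ := hz₁.exists_tendsto_pow_mul_norm_add_mul_I
  refine ⟨L * π ^ (q + 1) / (2 * q !), by positivity, fun ε hε => ?_⟩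
  have hlow := frequently_pow_mul_exp_le (a := fun m => ‖c m‖) (C := L * π ^ (q + 1) / (2 * q !))
    (fun _ => norm_nonneg _) (by positivity) (by field_simp; linarith) hsum hF hlim
  have hup := eventually_le_exp_of_summable (a := fun m => ‖c m‖)
    (hsum (τstar.im + ε) (by linarith))
  rw [← Nat.frequently_atTop_iff_infinite]
  exact (hlow.and_eventually (hup.and (eventually_gt_atTop 0))).mono
    fun n ⟨hlow, hup, hn⟩ => ⟨hn, by simpa using hlow, hup⟩

/-- Hagedorn growth of the Fourier coefficients of a meromorphic
modular form `f = g/h` with a pole in the upper half-plane: if `t` is the maximal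
imaginary part of a pole of `f` in the strip `|Re τ| ≤ 1/2` and `p` the maximal
order among poles at that height, then `t ≥ √3/2` and there is `C > 0` such that
for every `ε > 0` infinitely many positive `n` satisfy
`C n^(p-1) e^(2πnt) ≤ |c(n)| ≤ e^(2πn(t+ε))`. -/
theorem stmt_0 (k₁ k₂ k : ℤ) (g h f : ℂ → ℂ)
    (hg : IsModularForm k₁ g) (hh : IsModularForm k₂ h)
    (hhne : ∃ z : ℂ, 0 < z.im ∧ h z ≠ 0)
    (hk : k = k₁ - k₂)
    (hf : ∀ z : ℂ, f z = g z / h z)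
    (hpole : ∃ z : ℂ, 0 < z.im ∧ IsPole f z)
    (c : ℤ → ℂ) (N : ℤ)
    (hfour : ∀ τ : ℂ, 0 < τ.im →
      (∀ z : ℂ, 0 < z.im → IsPole f z → z.im < τ.im) →
      Summable (fun n : ℕ => ‖c (N + n) * Complex.exp (2 * π * I * ((N : ℂ) + n) * τ)‖) ∧
      f τ = ∑' n : ℕ, c (N + n) * Complex.exp (2 * π * I * ((N : ℂ) + n) * τ))
    (τstar : ℂ) (hτ1 : 0 < τstar.im) (hτ2 : IsPole f τstar)
    (hτ3 : |τstar.re| ≤ 1 / 2)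
    (t : ℝ) (ht : t = τstar.im)
    (htmax : ∀ z : ℂ, 0 < z.im → |z.re| ≤ 1 / 2 → IsPole f z → z.im ≤ t)
    (p : ℕ) (hp1 : 1 ≤ p)
    (hpex : ∃ z : ℂ, 0 < z.im ∧ z.im = t ∧ IsPoleOfOrder f z p)
    (hpmax : ∀ z : ℂ, 0 < z.im → z.im = t → ∀ m : ℕ, IsPoleOfOrder f z m → m ≤ p) :
    Real.sqrt 3 / 2 ≤ t ∧
    ∃ C : ℝ, 0 < C ∧ ∀ ε : ℝ, 0 < ε →
      {n : ℕ | 0 < n ∧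
        C * (n : ℝ) ^ (p - 1) * Real.exp (2 * π * n * t) ≤ ‖c (n : ℤ)‖ ∧
        ‖c (n : ℤ)‖ ≤ Real.exp (2 * π * n * (t + ε))}.Infinite :=
  stmt_0_general k₁ k₂ g h f hg hh hf c N hfour τstar hτ1 hτ2 hτ3 t ht htmax p hpex
end

section
/- Let f be a meromorphic function on the upper half-plane ℍ with f(τ+1) = f(τ), having at least one pole, having only finitely many poles in each set {τ ∈ ℍ : |Re τ| ≤ 1/2, Im τ ≥ δ} for every δ > 0, and whose poles have bounded imaginary parts. Let t₀ be the maximal imaginary part of a pole of f, let m₀ be the maximal order among the poles of f with imaginary part t₀, and let c : ℤ → ℂ and N ∈ ℤ be such that f(τ) = Σ_{n ≥ N} c(n) e^{2πinτ} (absolutely convergent) for all τ with Im τ > t₀. Then there exists a constant C > 0 such that |c(n)| > C · n^{m₀−1} · e^{2πn t₀} for infinitely many positive integers n. -/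
open Complex Real Filter Topology

/-! If the inequality held for only finitely many `n` (for a suitable `C`), then
`‖c n‖ ≤ C n^j e^{2πnt₀}` with `j = m₀ - 1` for all large `n`. At `τ = z₀ + iε`, with `z₀` a pole
of order `m₀` at height `t₀`, the tail of the Fourier series is then bounded using
`k^j e^{-2πkε} ≤ j!/(πε)^j · e^{-πεk}` and `Σ_{k ≥ 1} e^{-πεk} ≤ 1/(πε)`, giving
`‖f τ‖ ≤ B + C j!/ε^{m₀}`. The pole forces `‖f τ‖ ≥ g/ε^{m₀}` for some `g > 0`, which is
incompatible with this for `C = g/(2 j!)` as `ε → 0⁺`. -/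

open scoped Nat

lemma pow_mul_exp_neg_mul_le {a t : ℝ} (j : ℕ) (ha : 0 < a) (ht : 0 ≤ t) :
    t ^ j * rexp (-(a * t)) ≤ j ! / a ^ j := by
  have h := Real.pow_div_factorial_le_exp (a * t) (by positivity) j
  rw [div_le_iff₀ (by positivity)] at h
  rw [le_div_iff₀ (by positivity)]
  calc t ^ j * rexp (-(a * t)) * a ^ j = (a * t) ^ j * rexp (-(a * t)) := by ring
    _ ≤ rexp (a * t) * j ! * rexp (-(a * t)) := by gcongr
    _ = j ! := by rw [mul_right_comm, ← Real.exp_add, add_neg_cancel, Real.exp_zero, one_mul]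

lemma summable_exp_neg_mul_succ {x : ℝ} (hx : 0 < x) :
    Summable fun i : ℕ => rexp (-x * (i + 1)) :=
  Real.summable_exp_nat_mul_of_ge (neg_lt_zero.mpr hx) fun i => by linarith

lemma tsum_exp_neg_mul_succ_le {x : ℝ} (hx : 0 < x) :
    ∑' i : ℕ, rexp (-x * (i + 1)) ≤ 1 / x := by
  set r := rexp (-x) with hr
  have hr1 : r < 1 := Real.exp_lt_one_iff.mpr (neg_lt_zero.mpr hx)
  have hterm : ∀ i : ℕ, rexp (-x * (i + 1)) = r * r ^ i := fun i => by
    rw [hr, ← Real.exp_nat_mul, ← Real.exp_add]; ring_nf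
  have hxr : x * r + r ≤ 1 := by
    have := mul_le_mul_of_nonneg_right (Real.add_one_le_exp x) (Real.exp_nonneg (-x))
    rwa [← Real.exp_add, add_neg_cancel, Real.exp_zero, add_mul, one_mul] at this
  rw [tsum_congr hterm, tsum_mul_left, tsum_geometric_of_lt_one (Real.exp_nonneg _) hr1,
    ← div_eq_mul_inv, div_le_div_iff₀ (by linarith) hx]
  linarith

lemma norm_exp_two_pi_I_mul (x : ℝ) (τ : ℂ) :
    ‖cexp (2 * π * I * x * τ)‖ = rexp (-(2 * π * x * τ.im)) := by
  rw [Complex.norm_exp]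
  congr 1
  simp [Complex.mul_re, Complex.mul_im]

lemma mul_exp_le_of_le_pow_mul_exp {a C t t₀ ε : ℝ} (j : ℕ) (hC : 0 ≤ C) (ht : 0 ≤ t)
    (hε : 0 < ε) (ha : a ≤ C * t ^ j * rexp (2 * π * t * t₀)) :
    a * rexp (-(2 * π * t * (t₀ + ε))) ≤ C * j ! / (π * ε) ^ j * rexp (-(π * ε) * t) :=
  calc a * rexp (-(2 * π * t * (t₀ + ε)))
      ≤ C * t ^ j * rexp (2 * π * t * t₀) * rexp (-(2 * π * t * (t₀ + ε))) := by gcongr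
    _ = C * (t ^ j * rexp (-(π * ε * t))) * rexp (-(π * ε) * t) := by
        have hexp : rexp (2 * π * t * t₀) * rexp (-(2 * π * t * (t₀ + ε)))
            = rexp (-(π * ε * t)) * rexp (-(π * ε) * t) := by
          rw [← Real.exp_add, ← Real.exp_add]; ring_nf
        linear_combination C * t ^ j * hexp
    _ ≤ C * (j ! / (π * ε) ^ j) * rexp (-(π * ε) * t) := by
        gcongr
        exact pow_mul_exp_neg_mul_le j (by positivity) ht
    _ = C * j ! / (π * ε) ^ j * rexp (-(π * ε) * t) := by ring

lemma IsPoleOfOrder.exists_eventually_le_norm_mul_pow {f : ℂ → ℂ} {z₀ : ℂ} {p : ℕ}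
    (h : IsPoleOfOrder f z₀ p) : ∃ g > 0, ∀ᶠ z in 𝓝[≠] z₀, g ≤ ‖f z‖ * ‖z - z₀‖ ^ p := by
  obtain ⟨-, G, hG, hG₀, hfG⟩ := h
  have hGnear : ∀ᶠ z in 𝓝 z₀, ‖G z₀‖ / 2 < ‖G z‖ :=
    hG.continuousAt.norm.eventually (eventually_gt_nhds (half_lt_self (norm_pos_iff.mpr hG₀)))
  refine ⟨‖G z₀‖ / 2, by positivity, ?_⟩
  filter_upwards [hfG, nhdsWithin_le_nhds hGnear, self_mem_nhdsWithin] with z hfz hGz hz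
  have hz' : z - z₀ ≠ 0 := sub_ne_zero.mpr hz
  rw [hfz, norm_div, norm_pow, div_mul_cancel₀ _ (pow_ne_zero _ (norm_ne_zero_iff.mpr hz'))]
  exact hGz.le

lemma tendsto_add_ofReal_mul_I_nhdsGT (z₀ : ℂ) :
    Tendsto (fun ε : ℝ => z₀ + ε * I) (𝓝[>] 0) (𝓝[≠] z₀) := by
  refine tendsto_nhdsWithin_of_tendsto_nhds_of_eventually_within _ ?_ ?_
  · exact (Continuous.tendsto' (by fun_prop) 0 z₀ (by simp)).mono_left nhdsWithin_le_nhds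
  · filter_upwards [self_mem_nhdsWithin] with ε (hε : 0 < ε)
    simpa using hε.ne'

lemma eventually_norm_tsum_fourier_le {c : ℤ → ℂ} {t₀ C : ℝ} {j n₀ : ℕ} (hC : 0 ≤ C)
    (hc : ∀ n : ℕ, n₀ < n → ‖c n‖ ≤ C * (n : ℝ) ^ j * rexp (2 * π * n * t₀)) (N : ℤ) :
    ∃ B : ℝ, ∀ᶠ ε in 𝓝[>] (0 : ℝ), ∀ τ : ℂ, τ.im = t₀ + ε →
      Summable (fun n : ℕ => ‖c (N + n) * cexp (2 * π * I * ((N : ℂ) + n) * τ)‖) →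
      ‖∑' n : ℕ, c (N + n) * cexp (2 * π * I * ((N : ℂ) + n) * τ)‖ ≤
        B + C * j ! / ε ^ (j + 1) := by
  obtain ⟨k₀, hk₀⟩ : ∃ k₀ : ℕ, (n₀ : ℤ) < N + k₀ :=
    ⟨(n₀ + 1 - N).toNat, by linarith [Int.self_le_toNat (n₀ + 1 - N)]⟩
  set a : ℝ → ℕ → ℝ := fun ε n => ‖c (N + n)‖ * rexp (-(2 * π * ((N + n : ℤ) : ℝ) * (t₀ + ε)))
  have hhead : Continuous fun ε => ∑ i ∈ Finset.range k₀, a ε i := by fun_prop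
  refine ⟨∑ i ∈ Finset.range k₀, a 0 i + 1, ?_⟩
  filter_upwards [nhdsWithin_le_nhds ((hhead.tendsto 0).eventually_le_const (lt_add_one _)),
    self_mem_nhdsWithin] with ε hheadε (hε : 0 < ε) τ hτ hsum
  have hπε : 0 < π * ε := by positivity
  have hnorm : ∀ n : ℕ, ‖c (N + n) * cexp (2 * π * I * ((N : ℂ) + n) * τ)‖ = a ε n := fun n => by
    rw [norm_mul, show ((N : ℂ) + n) = (((N + n : ℤ) : ℝ) : ℂ) by push_cast; ring,
      norm_exp_two_pi_I_mul, hτ]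
  have hsum' : Summable (a ε) := hsum.congr hnorm
  have htail : ∀ i : ℕ, a ε (i + k₀) ≤ C * j ! / (π * ε) ^ j * rexp (-(π * ε) * (i + 1)) := by
    intro i
    obtain ⟨n, hn⟩ : ∃ n : ℕ, (n : ℤ) = N + ↑(i + k₀) := ⟨_, Int.toNat_of_nonneg (by omega)⟩
    have hi : (i : ℝ) + 1 ≤ n := by exact_mod_cast (by omega : (i : ℤ) + 1 ≤ n)
    calc a ε (i + k₀)
        ≤ C * j ! / (π * ε) ^ j * rexp (-(π * ε) * n) := by
          simp only [a, ← hn, Int.cast_natCast]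
          exact mul_exp_le_of_le_pow_mul_exp j hC n.cast_nonneg hε (hc n (by omega))
      _ ≤ C * j ! / (π * ε) ^ j * rexp (-(π * ε) * (i + 1)) :=
          mul_le_mul_of_nonneg_left (Real.exp_le_exp.mpr (by nlinarith)) (by positivity)
  calc ‖∑' n : ℕ, c (N + n) * cexp (2 * π * I * ((N : ℂ) + n) * τ)‖
      ≤ ∑' n, a ε n := (norm_tsum_le_tsum_norm hsum).trans_eq (tsum_congr hnorm)
    _ = ∑ i ∈ Finset.range k₀, a ε i + ∑' i, a ε (i + k₀) := (hsum'.sum_add_tsum_nat_add k₀).symm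
    _ ≤ (∑ i ∈ Finset.range k₀, a 0 i + 1) +
          C * j ! / (π * ε) ^ j * ∑' i : ℕ, rexp (-(π * ε) * (i + 1)) := by
        rw [← tsum_mul_left]
        exact add_le_add hheadε (Summable.tsum_le_tsum htail
          ((summable_nat_add_iff k₀).mpr hsum') ((summable_exp_neg_mul_succ hπε).mul_left _))
    _ ≤ (∑ i ∈ Finset.range k₀, a 0 i + 1) + C * j ! / (π * ε) ^ j * (1 / (π * ε)) := by
        gcongr
        exact tsum_exp_neg_mul_succ_le hπε
    _ = (∑ i ∈ Finset.range k₀, a 0 i + 1) + C * j ! / (π * ε) ^ (j + 1) := by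
        rw [pow_succ]; field_simp
    _ ≤ (∑ i ∈ Finset.range k₀, a 0 i + 1) + C * j ! / ε ^ (j + 1) := by
        gcongr
        nlinarith [pi_gt_three]

theorem stmt_2_general (f : ℂ → ℂ) (P : Set ℂ)
    (t₀ : ℝ)
    (m₀ : ℕ) (hm₀ : ∃ z ∈ P, z.im = t₀ ∧ IsPoleOfOrder f z m₀)
    (c : ℤ → ℂ) (N : ℤ)
    (hfour : ∀ τ : ℂ, t₀ < τ.im →
      Summable (fun n : ℕ => ‖c (N + n) * Complex.exp (2 * π * I * ((N : ℂ) + n) * τ)‖) ∧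
      f τ = ∑' n : ℕ, c (N + n) * Complex.exp (2 * π * I * ((N : ℂ) + n) * τ)) :
    ∃ C : ℝ, 0 < C ∧
      {n : ℕ | 0 < n ∧
        C * (n : ℝ) ^ (m₀ - 1) * Real.exp (2 * π * n * t₀) < ‖c (n : ℤ)‖}.Infinite := by
  by_contra! hfinite
  obtain ⟨z₀, -, hz₀, hpole⟩ := hm₀
  obtain ⟨j, rfl⟩ : ∃ j, m₀ = j + 1 := Nat.exists_eq_add_one.mpr hpole.1
  obtain ⟨g, hg, hlow⟩ := hpole.exists_eventually_le_norm_mul_pow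
  set C := g / (2 * j !) with hC
  obtain ⟨n₀, hn₀⟩ := (hfinite C (by positivity)).bddAbove
  have hc : ∀ n : ℕ, n₀ < n → ‖c n‖ ≤ C * (n : ℝ) ^ j * rexp (2 * π * n * t₀) :=
    fun n hn => not_lt.mp fun hlt => (hn₀ ⟨by omega, by simpa using hlt⟩).not_gt hn
  obtain ⟨B, hup⟩ := eventually_norm_tsum_fourier_le (by positivity) hc N
  have hsmall : ∀ᶠ ε in 𝓝[>] (0 : ℝ), B * ε ^ (j + 1) < g / 2 :=
    nhdsWithin_le_nhds <| (Continuous.tendsto (by fun_prop) 0).eventually_lt_const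
      (by simpa using half_pos hg)
  obtain ⟨ε, hε, hlowε, hupε, hsmallε⟩ := (eventually_mem_nhdsWithin.and <|
    ((tendsto_add_ofReal_mul_I_nhdsGT z₀).eventually hlow).and (hup.and hsmall)).exists
  have hτ : (z₀ + ε * I).im = t₀ + ε := by simp [hz₀]
  obtain ⟨hsum, hfτ⟩ := hfour _ (by rw [hτ]; linarith [show (0 : ℝ) < ε from hε])
  have hupper := hupε _ hτ hsum
  rw [← hfτ] at hupper
  simp only [add_sub_cancel_left, norm_mul, Complex.norm_I, mul_one, Complex.norm_real,
    Real.norm_of_nonneg (le_of_lt hε)] at hlowε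
  have hCj : C * j ! = g / 2 := by rw [hC]; field_simp
  have hεpos : 0 < ε ^ (j + 1) := pow_pos hε _
  have hscaled := mul_le_mul_of_nonneg_right hupper hεpos.le
  rw [add_mul, div_mul_cancel₀ _ hεpos.ne', hCj] at hscaled
  linarith

/-- if `f` is 1-periodic and meromorphic on the upper half-plane with
pole set `P` (nonempty, locally finite in truncated strips, with bounded imaginary
parts), `t₀` is the maximal imaginary part of a pole and `m₀` the maximal order at
that height, then the Fourier coefficients (for the expansion valid above height
`t₀`) satisfy `|c(n)| > C n^(m₀-1) e^(2πnt₀)` for infinitely many positive `n`. -/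
theorem stmt_2 (f : ℂ → ℂ) (P : Set ℂ)
    (hPsub : P ⊆ {z : ℂ | 0 < z.im})
    (hol : DifferentiableOn ℂ f ({z : ℂ | 0 < z.im} \ P))
    (hpoles : ∀ z ∈ P, IsPole f z)
    (hper : ∀ z : ℂ, 0 < z.im → f (z + 1) = f z)
    (hne : P.Nonempty)
    (hfin : ∀ δ : ℝ, 0 < δ →
      {z ∈ P | |z.re| ≤ 1 / 2 ∧ δ ≤ z.im}.Finite)
    (hbdd : BddAbove (Complex.im '' P))
    (t₀ : ℝ) (ht₀ : ∃ z ∈ P, z.im = t₀) (ht₀max : ∀ z ∈ P, z.im ≤ t₀)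
    (m₀ : ℕ) (hm₀ : ∃ z ∈ P, z.im = t₀ ∧ IsPoleOfOrder f z m₀)
    (hm₀max : ∀ z ∈ P, z.im = t₀ → ∀ m : ℕ, IsPoleOfOrder f z m → m ≤ m₀)
    (c : ℤ → ℂ) (N : ℤ)
    (hfour : ∀ τ : ℂ, t₀ < τ.im →
      Summable (fun n : ℕ => ‖c (N + n) * Complex.exp (2 * π * I * ((N : ℂ) + n) * τ)‖) ∧
      f τ = ∑' n : ℕ, c (N + n) * Complex.exp (2 * π * I * ((N : ℂ) + n) * τ)) :
    ∃ C : ℝ, 0 < C ∧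
      {n : ℕ | 0 < n ∧
        C * (n : ℝ) ^ (m₀ - 1) * Real.exp (2 * π * n * t₀) < ‖c (n : ℤ)‖}.Infinite :=
  stmt_2_general f P t₀ m₀ hm₀ c N hfour
end

section
/- For each integer m ≥ 1 let ℒ_m : ℂ∖ℤ → ℂ be the result of applying the operator (1/(2πi)) d/dz exactly (m−1) times to the function z ↦ e^{2πiz}/(1 − e^{2πiz}) (so that ℒ_m(z) = Σ_{n≥1} n^{m−1} e^{2πinz} whenever Im z > 0). Let τ_p ∈ ℂ, let M ≥ 1, and let f be holomorphic on a punctured neighborhood of τ_p with a pole of order at most M at τ_p and Laurent expansion f(τ) = Σ_{n ≥ −M} r(n)(τ − τ_p)^n near τ_p. Then the function τ ↦ f(τ) − Σ_{m=1}^{M} ((−2πi)^m/(m−1)!) · r(−m) · ℒ_m(τ − τ_p) extends holomorphically to a full neighborhood of τ_p. -/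
/-!
Near `0`, `ℒ₁(z) = e^{2πiz}/(1 - e^{2πiz})` is `(-2πi)⁻¹ z⁻¹` plus a holomorphic
function, and differentiating shows that `ℒ_{m+1}(z) - m!/(-2πi)^{m+1} z^{-(m+1)}` is
holomorphic at `0` as well. So the `m`-th subtracted term reproduces the principal-part term
`r(-m) (τ - τ_p)^{-m}` of `f` up to a holomorphic function, and what remains of `f` is the
regular part `Σ_{n ≥ 0} r(n) (τ - τ_p)^n` of its Laurent series: a power series converging on a
punctured disc, hence analytic at `τ_p`.
-/

open Complex Real Filter Topology

/-- `ℒ_m`: the result of applying the operator `(1/(2πi)) d/dz` exactly `m - 1`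
times to `z ↦ e^{2πiz}/(1 - e^{2πiz})`; for `Im z > 0` one has
`ℒ_m(z) = Σ_{n≥1} n^{m-1} e^{2πinz} = Li_{1-m}(e^{2πiz})`. -/
noncomputable def polyLi (m : ℕ) : ℂ → ℂ :=
  (fun g : ℂ → ℂ => fun z => (2 * π * I)⁻¹ * deriv g z)^[m - 1]
    (fun z => Complex.exp (2 * π * I * z) / (1 - Complex.exp (2 * π * I * z)))

section

variable {𝕜 : Type*} [NontriviallyNormedField 𝕜]

theorem analyticAt_dslope {E : Type*} [NormedAddCommGroup E] [NormedSpace 𝕜 E] {f : 𝕜 → E}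
    {a : 𝕜} (hf : AnalyticAt 𝕜 f a) :
    AnalyticAt 𝕜 (dslope f a) a :=
  let ⟨_, hp⟩ := hf
  ⟨_, hp.has_fpower_series_dslope_fslope⟩

theorem exists_div_eventuallyEq_inv_sub_add {g h : 𝕜 → 𝕜} {a : 𝕜}
    (hg : AnalyticAt 𝕜 g a) (hh : AnalyticAt 𝕜 h a) (ha : h a = 0) (hd : deriv h a ≠ 0) :
    ∃ B : 𝕜 → 𝕜, AnalyticAt 𝕜 B a ∧
      (fun z => g z / h z) =ᶠ[𝓝[≠] a] fun z => g a / deriv h a * (z - a)⁻¹ + B z := by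
  set φ := fun z => g z * (dslope h a z)⁻¹
  have hφ : AnalyticAt 𝕜 φ a := hg.mul ((analyticAt_dslope hh).inv (by rwa [dslope_same]))
  refine ⟨dslope φ a, analyticAt_dslope hφ, ?_⟩
  filter_upwards [self_mem_nhdsWithin] with z (hz : z ≠ a)
  have hhz : h z = (z - a) * dslope h a z := by
    simpa [ha] using (sub_smul_dslope h a z).symm
  have hφz : φ z = φ a + (z - a) * dslope φ a z :=
    eq_add_of_sub_eq' (sub_smul_dslope φ a z).symm
  calc g z / h z = φ z * (z - a)⁻¹ := by simp only [φ, hhz]; field_simp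
    _ = g a / deriv h a * (z - a)⁻¹ + dslope φ a z := by
      rw [hφz]
      simp only [φ, dslope_same]
      field_simp

theorem HasSum.sub_principalPart {a : ℤ → 𝕜} {w s : 𝕜} {M : ℕ}
    (h : HasSum (fun j : ℕ => a (j - M) * w ^ ((j : ℤ) - M)) s) :
    HasSum (fun n : ℕ => a n * w ^ n)
      (s - ∑ j ∈ Finset.range M, a (-(j + 1 : ℤ)) * w ^ (-(j + 1 : ℤ))) := by
  have htail := (hasSum_nat_add_iff' M).mpr h
  simp only [Nat.cast_add, add_sub_cancel_right, zpow_natCast] at htail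
  have hreflect : ∑ i ∈ Finset.range M, a (i - M) * w ^ ((i : ℤ) - M)
      = ∑ j ∈ Finset.range M, a (-(j + 1 : ℤ)) * w ^ (-(j + 1 : ℤ)) := by
    rw [← Finset.sum_range_reflect]
    refine Finset.sum_congr rfl fun j hj => ?_
    have hjM := Finset.mem_range.mp hj
    rw [show ((M - 1 - j : ℕ) : ℤ) - M = -(j + 1) by omega]
  rwa [hreflect] at htail

theorem deriv_eventuallyEq_zpow_add {F B : 𝕜 → 𝕜} {a c : 𝕜} {k : ℤ}
    (hB : ∀ᶠ z in 𝓝[≠] a, DifferentiableAt 𝕜 B z)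
    (hF : F =ᶠ[𝓝[≠] a] fun z => c * (z - a) ^ k + B z) :
    deriv F =ᶠ[𝓝[≠] a] fun z => c * k * (z - a) ^ (k - 1) + deriv B z := by
  filter_upwards [hF.nhdsNE_deriv, self_mem_nhdsWithin, hB] with z hFz (hz : z ≠ a) hBz
  have hpow : HasDerivAt (fun z => (z - a) ^ k) (k * (z - a) ^ (k - 1)) z := by
    simpa using (hasDerivAt_zpow k (z - a) (.inl (sub_ne_zero.mpr hz))).comp_sub_const z a
  rw [hFz, mul_assoc]
  exact ((hpow.const_mul c).add hBz.hasDerivAt).deriv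

variable [CompleteSpace 𝕜]

theorem analyticAt_tsum_mul_pow_of_summable {a : ℕ → 𝕜} {w₀ : 𝕜} (hw₀ : w₀ ≠ 0)
    (h : Summable fun n => a n * w₀ ^ n) :
    AnalyticAt 𝕜 (fun w => ∑' n, a n * w ^ n) 0 := by
  set p := FormalMultilinearSeries.ofScalars 𝕜 a
  have hrad : (‖w₀‖₊ : ENNReal) ≤ p.radius := by
    refine p.le_radius_of_tendsto (l := 0) ?_
    simpa [p, FormalMultilinearSeries.ofScalars_norm] using h.tendsto_atTop_zero.norm
  have hpos : 0 < p.radius := lt_of_lt_of_le (by simpa using hw₀) hrad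
  convert (p.hasFPowerSeriesOnBall hpos).analyticAt using 2 with w
  simp [p, FormalMultilinearSeries.sum, mul_comm]

theorem exists_analyticAt_eventuallyEq_sub_principalPart {τp : 𝕜} {M : ℕ} {f : 𝕜 → 𝕜}
    {r : ℤ → 𝕜}
    (hLaurent : ∃ ε : ℝ, 0 < ε ∧ ∀ τ : 𝕜, τ ≠ τp → ‖τ - τp‖ < ε →
      HasSum (fun j : ℕ => r ((j : ℤ) - M) * (τ - τp) ^ ((j : ℤ) - (M : ℤ))) (f τ)) :
    ∃ g : 𝕜 → 𝕜, AnalyticAt 𝕜 g τp ∧ ∀ᶠ τ in 𝓝[≠] τp, g τ =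
      f τ - ∑ j ∈ Finset.range M, r (-(j + 1 : ℤ)) * (τ - τp) ^ (-(j + 1 : ℤ)) := by
  obtain ⟨ε, hε, hL⟩ := hLaurent
  have hsum (τ : 𝕜) (hτ : τ ≠ τp) (hτε : ‖τ - τp‖ < ε) :=
    (hL τ hτ hτε).sub_principalPart
  refine ⟨fun τ => ∑' n : ℕ, r n * (τ - τp) ^ n, ?_, ?_⟩
  · obtain ⟨w₀, hw₀, hw₀ε⟩ := NormedField.exists_norm_lt 𝕜 hε
    have hτ₀ : τp + w₀ ≠ τp := by simpa using norm_pos_iff.mp hw₀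
    have hconv := (hsum (τp + w₀) hτ₀ (by simpa using hw₀ε)).summable
    simp only [add_sub_cancel_left] at hconv
    exact (analyticAt_tsum_mul_pow_of_summable (norm_pos_iff.mp hw₀) hconv).comp_of_eq
      (analyticAt_id.sub analyticAt_const) (sub_self τp)
  · filter_upwards [self_mem_nhdsWithin, nhdsWithin_le_nhds (Metric.ball_mem_nhds τp hε)]
      with τ hτ hτε
    exact (hsum τ hτ (mem_ball_iff_norm.mp hτε)).tsum_eq

end

theorem polyLi_add_two (m : ℕ) :
    polyLi (m + 2) = fun z => (2 * π * I)⁻¹ * deriv (polyLi (m + 1)) z :=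
  Function.iterate_succ_apply' _ m _

theorem exists_polyLi_eventuallyEq_zpow_add (m : ℕ) : ∃ B : ℂ → ℂ, AnalyticAt ℂ B 0 ∧
    polyLi (m + 1) =ᶠ[𝓝[≠] 0]
      fun z => (m.factorial / (-(2 * π * I)) ^ (m + 1)) * z ^ (-(m + 1 : ℤ)) + B z := by
  have h2πi : (2 * π * I : ℂ) ≠ 0 := by simp [Real.pi_ne_zero, I_ne_zero]
  induction m with
  | zero =>
    have hexp : AnalyticAt ℂ (fun z : ℂ => exp (2 * π * I * z)) 0 := by fun_prop
    have hderiv : deriv (fun z : ℂ => 1 - exp (2 * π * I * z)) 0 = -(2 * π * I) := by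
      simpa using ((((hasDerivAt_id 0).const_mul (2 * π * I)).cexp).const_sub 1).deriv
    obtain ⟨B, hB, hEq⟩ := exists_div_eventuallyEq_inv_sub_add
      (h := fun z => 1 - exp (2 * π * I * z)) hexp (analyticAt_const.sub hexp) (by simp)
      (by rw [hderiv]; exact neg_ne_zero.mpr h2πi)
    refine ⟨B, hB, hEq.trans (.of_eq ?_)⟩
    ext z
    simp [hderiv, div_eq_mul_inv]
  | succ m ih =>
    obtain ⟨B, hB, hEq⟩ := ih
    refine ⟨fun z => (2 * π * I)⁻¹ * deriv B z, analyticAt_const.mul hB.deriv, ?_⟩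
    rw [polyLi_add_two]
    have hBdiff : ∀ᶠ z in 𝓝[≠] 0, DifferentiableAt ℂ B z :=
      nhdsWithin_le_nhds (hB.eventually_analyticAt.mono fun _ h => h.differentiableAt)
    filter_upwards [deriv_eventuallyEq_zpow_add hBdiff (by simpa only [sub_zero] using hEq)]
      with z hz
    rw [hz, mul_add, sub_zero,
      show -((m : ℤ) + 1) - 1 = -((m + 1 : ℕ) + 1 : ℤ) by push_cast; ring]
    congr 1
    push_cast [Nat.factorial_succ, pow_succ]
    field_simp

theorem stmt_4_general (τp : ℂ) (M : ℕ) (f : ℂ → ℂ) (r : ℤ → ℂ)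
    (hLaurent : ∃ ε : ℝ, 0 < ε ∧ ∀ τ : ℂ, τ ≠ τp → ‖τ - τp‖ < ε →
      HasSum (fun j : ℕ => r ((j : ℤ) - M) * (τ - τp) ^ ((j : ℤ) - (M : ℤ))) (f τ)) :
    ∃ G : ℂ → ℂ, AnalyticAt ℂ G τp ∧
      ∀ᶠ τ in nhdsWithin τp {τp}ᶜ,
        G τ = f τ - ∑ j ∈ Finset.range M,
          ((-(2 * π * I)) ^ (j + 1) / (Nat.factorial j : ℂ)) * r (-(j + 1 : ℤ))
            * polyLi (j + 1) (τ - τp) := by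
  obtain ⟨g, hg, hgf⟩ := exists_analyticAt_eventuallyEq_sub_principalPart hLaurent
  choose B hB hpolyLi using exists_polyLi_eventuallyEq_zpow_add
  have hshift : Tendsto (fun τ => τ - τp) (𝓝[≠] τp) (𝓝[≠] 0) := by
    simpa using ((hasDerivAt_id τp).sub_const τp).tendsto_nhdsNE one_ne_zero
  have hsub : AnalyticAt ℂ (fun τ => τ - τp) τp := analyticAt_id.sub analyticAt_const
  refine ⟨fun τ => g τ - ∑ j ∈ Finset.range M,
      ((-(2 * π * I)) ^ (j + 1) / (Nat.factorial j : ℂ)) * r (-(j + 1 : ℤ)) * B j (τ - τp),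
    hg.sub (Finset.analyticAt_fun_sum _ fun j _ =>
      analyticAt_const.mul ((hB j).comp_of_eq hsub (sub_self τp))), ?_⟩
  filter_upwards [hgf, hshift.eventually ((eventually_all_finset (Finset.range M)).2
    fun j _ => hpolyLi j)] with τ hgτ hpolyLiτ
  rw [hgτ, sub_sub, ← Finset.sum_add_distrib]
  congr 1
  refine Finset.sum_congr rfl fun j hj => ?_
  rw [hpolyLiτ j hj]
  have hfac : (j.factorial : ℂ) ≠ 0 := mod_cast j.factorial_ne_zero
  field_simp

/-- subtracting the polar combination
`Σ_{m=1}^M ((-2πi)^m/(m-1)!) r(-m) ℒ_m(τ - τ_p)` from a function `f` with a pole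
of order at most `M` at `τ_p` (with Laurent coefficients `r`) leaves a function
that extends holomorphically to a full neighborhood of `τ_p`. -/
theorem stmt_4 (τp : ℂ) (M : ℕ) (hM : 1 ≤ M) (f : ℂ → ℂ) (r : ℤ → ℂ)
    (hhol : ∀ᶠ τ in nhdsWithin τp {τp}ᶜ, DifferentiableAt ℂ f τ)
    (hLaurent : ∃ ε : ℝ, 0 < ε ∧ ∀ τ : ℂ, τ ≠ τp → ‖τ - τp‖ < ε →
      HasSum (fun j : ℕ => r ((j : ℤ) - M) * (τ - τp) ^ ((j : ℤ) - (M : ℤ))) (f τ)) :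
    ∃ G : ℂ → ℂ, AnalyticAt ℂ G τp ∧
      ∀ᶠ τ in nhdsWithin τp {τp}ᶜ,
        G τ = f τ - ∑ j ∈ Finset.range M,
          ((-(2 * π * I)) ^ (j + 1) / (Nat.factorial j : ℂ)) * r (-(j + 1 : ℤ))
            * polyLi (j + 1) (τ - τp) :=
  stmt_4_general τp M f r hLaurent
end

section
/- Let k ≥ 0 be an even integer, let f be a level-one holomorphic modular form of weight k with Fourier expansion f(τ) = Σ_{n≥0} c(n) e^{2πinτ}, and let B > 0. Then the series Σ_{n=1}^∞ c(n) [Γ(s, 2πnB)/(2πn)^s + i^k Γ(k−s, 2πn/B)/(2πn)^{k−s}] converges absolutely for every s ∈ ℂ, and for every s with Re(s) > k + 1 one has ∫₀^∞ t^{s−1}(f(it) − c(0)) dt = −c(0)·(B^s/s + i^k B^{s−k}/(k−s)) + Σ_{n=1}^∞ c(n) [Γ(s, 2πnB)/(2πn)^s + i^k Γ(k−s, 2πn/B)/(2πn)^{k−s}]. -/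
/-!
Split the integral at `B`. On `(B, ∞)` the expansion `f(it) - c(0) = ∑_{n ≥ 1} c(n) e^{-2πnt}`
may be integrated termwise against `t^{s-1}`, because the integrals of the norms of the terms are
summable; the `n`-th term gives `c(n) Γ(s, 2πnB) / (2πn)^s`. On `(0, B)` the substitution
`t = 1/u` and the modular relation `f(i/u) = (iu)^k f(iu)` give `i^k ∫_{1/B}^∞ u^{k-s-1} f(iu) du`,
which is the same tail integral with `s` replaced by `k - s`, up to the elementary integrals of the
constant term `c(0)`. The bound on the norms also gives the absolute convergence of the series.
-/

open Complex Real Filter Topology MeasureTheory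

/-- The upper incomplete gamma function `Γ(a, x) = ∫_x^∞ u^{a-1} e^{-u} du`. -/
noncomputable def iGamma (a : ℂ) (x : ℝ) : ℂ :=
  ∫ u in Set.Ioi x, (u : ℂ) ^ (a - 1) * Complex.exp (-(u : ℂ))

open Set

theorem integrable_of_hasSum_of_summable_integral_norm {α E ι : Type*} [MeasurableSpace α]
    {μ : Measure α} [NormedAddCommGroup E] [Countable ι] {F : ι → α → E} {f : α → E}
    (hF_int : ∀ i, Integrable (F i) μ) (hF_sum : Summable fun i ↦ ∫ a, ‖F i a‖ ∂μ)
    (hf : ∀ᵐ a ∂μ, HasSum (F · a) (f a)) :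
    Integrable f μ := by
  refine ⟨aestronglyMeasurable_of_tendsto_ae _
    (fun s ↦ Finset.aestronglyMeasurable_fun_sum s fun i _ ↦ (hF_int i).1) hf, ?_⟩
  have hle : ∀ᵐ a ∂μ, ‖f a‖ₑ ≤ ∑' i, ‖F i a‖ₑ := by
    filter_upwards [hf] with a ha
    rw [← ha.tsum_eq]
    exact enorm_tsum_le_tsum_enorm
  refine (lintegral_mono_ae hle).trans_lt ?_
  rw [lintegral_tsum fun i ↦ (hF_int i).1.enorm]
  have (i : ι) : ∫⁻ a, ‖F i a‖ₑ ∂μ = ENNReal.ofReal (∫ a, ‖F i a‖ ∂μ) :=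
    (ofReal_integral_norm_eq_lintegral_enorm (hF_int i)).symm
  simp_rw [this]
  exact ENNReal.ofReal_tsum_of_nonneg (fun i ↦ integral_nonneg fun a ↦ norm_nonneg _) hF_sum ▸
    ENNReal.ofReal_lt_top

theorem integrableOn_Ioi_rpow_mul_exp_neg_mul (r : ℝ) {b X : ℝ} (hb : 0 < b) (hX : 0 < X) :
    IntegrableOn (fun t : ℝ ↦ t ^ r * rexp (-b * t)) (Ioi X) := by
  refine integrable_of_isBigO_exp_neg (half_pos hb) ?_ ?_
  · exact ((continuousOn_id.rpow_const fun t ht ↦ Or.inl (hX.trans_le ht).ne').mul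
      (by fun_prop))
  · have h := (tendsto_rpow_mul_exp_neg_mul_atTop_nhds_zero r (b / 2) (half_pos hb)).isBigO_one ℝ
    refine (h.mul (Asymptotics.isBigO_refl (fun t : ℝ ↦ rexp (-(b / 2) * t)) atTop)).congr
      (fun t ↦ ?_) fun t ↦ one_mul _
    rw [mul_assoc, ← Real.exp_add]
    ring_nf

theorem norm_ofReal_cpow_mul_exp (s : ℂ) {t : ℝ} (ht : 0 < t) (x : ℝ) :
    ‖(t : ℂ) ^ s * (rexp x : ℂ)‖ = t ^ s.re * rexp x := by
  rw [norm_mul, norm_cpow_eq_rpow_re_of_pos ht, norm_real, norm_of_nonneg (exp_pos x).le]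

theorem integrableOn_Ioi_cpow_mul_exp_neg_mul (s : ℂ) {b X : ℝ} (hb : 0 < b) (hX : 0 < X) :
    IntegrableOn (fun t : ℝ ↦ (t : ℂ) ^ s * (rexp (-b * t) : ℂ)) (Ioi X) := by
  have hmeas : AEStronglyMeasurable (fun t : ℝ ↦ (t : ℂ) ^ s * (rexp (-b * t) : ℂ))
      (volume.restrict (Ioi X)) := by
    refine ContinuousOn.aestronglyMeasurable (fun t ht ↦ ?_) measurableSet_Ioi
    exact ((continuousAt_ofReal_cpow_const t s (Or.inr (hX.trans ht).ne')).mul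
      (by fun_prop)).continuousWithinAt
  exact (integrable_norm_iff hmeas).1 ((integrableOn_Ioi_rpow_mul_exp_neg_mul s.re hb hX).congr_fun
    (fun t ht ↦ (norm_ofReal_cpow_mul_exp s (hX.trans ht) _).symm) measurableSet_Ioi)

theorem integral_Ioi_cpow_mul_exp_neg_mul (s : ℂ) {p X : ℝ} (hp : 0 < p) (hX : 0 ≤ X) :
    ∫ t in Ioi X, (t : ℂ) ^ (s - 1) * (rexp (-p * t) : ℂ) = iGamma s (p * X) / (p : ℂ) ^ s := by
  have hp' : (p : ℂ) ≠ 0 := ofReal_ne_zero.mpr hp.ne'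
  have hps : (p : ℂ) ^ s = p ^ (s - 1) * p := by
    conv_lhs => rw [← sub_add_cancel s 1, cpow_add _ _ hp', cpow_one]
  have hps' : (p : ℂ) ^ (s - 1) ≠ 0 := by simp [cpow_eq_zero_iff, hp']
  calc ∫ t in Ioi X, (t : ℂ) ^ (s - 1) * (rexp (-p * t) : ℂ)
      = ∫ t in Ioi X,
          ((p : ℂ) ^ (s - 1))⁻¹ * (((p * t : ℝ) : ℂ) ^ (s - 1) * cexp (-((p * t : ℝ) : ℂ))) := by
        refine setIntegral_congr_fun measurableSet_Ioi fun t ht ↦ ?_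
        rw [ofReal_mul, mul_cpow_ofReal_nonneg hp.le (hX.trans_lt ht).le, ofReal_exp]
        push_cast
        field_simp
    _ = iGamma s (p * X) / (p : ℂ) ^ s := by
        rw [integral_const_mul, integral_comp_mul_left_Ioi
          (fun u : ℝ ↦ (u : ℂ) ^ (s - 1) * cexp (-(u : ℂ))) X hp, iGamma, real_smul, hps,
          ofReal_inv]
        field_simp

theorem exp_neg_mul_le_exp_neg_mul_mul {p₀ p X t : ℝ} (hp : p₀ ≤ p) (ht : X ≤ t) :
    rexp (-p * t) ≤ rexp (-p * X) * (rexp (p₀ * X) * rexp (-p₀ * t)) := by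
  rw [← Real.exp_add, ← Real.exp_add]
  exact Real.exp_le_exp.2 (by nlinarith)

section DirichletSeriesTail

variable {ι : Type*} {a : ι → ℂ} {p : ι → ℝ} {p₀ X : ℝ}

theorem integrableOn_Ioi_cpow_mul_mul_exp (hp₀ : 0 < p₀) (hp : ∀ i, p₀ ≤ p i) (hX : 0 < X)
    (s : ℂ) (i : ι) :
    IntegrableOn (fun t : ℝ ↦ (t : ℂ) ^ (s - 1) * (a i * rexp (-p i * t))) (Ioi X) := by
  refine IntegrableOn.congr_fun ((integrableOn_Ioi_cpow_mul_exp_neg_mul (s - 1)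
    (hp₀.trans_le (hp i)) hX).const_mul (a i)) (fun t _ ↦ ?_) measurableSet_Ioi
  ring

theorem integral_Ioi_cpow_mul_mul_exp (hp₀ : 0 < p₀) (hp : ∀ i, p₀ ≤ p i) (hX : 0 < X)
    (s : ℂ) (i : ι) :
    ∫ t in Ioi X, (t : ℂ) ^ (s - 1) * (a i * rexp (-p i * t))
      = a i * (iGamma s (p i * X) / (p i : ℂ) ^ s) := by
  simp_rw [mul_left_comm _ (a i)]
  rw [integral_const_mul, integral_Ioi_cpow_mul_exp_neg_mul s (hp₀.trans_le (hp i)) hX.le]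

theorem summable_integral_norm_cpow_mul_exp (hp₀ : 0 < p₀) (hp : ∀ i, p₀ ≤ p i) (hX : 0 < X)
    (h_sum : Summable fun i ↦ ‖a i‖ * rexp (-p i * X)) (s : ℂ) :
    Summable fun i ↦ ∫ t in Ioi X, ‖(t : ℂ) ^ (s - 1) * (a i * rexp (-p i * t))‖ := by
  set g : ℝ → ℝ := fun t ↦ rexp (p₀ * X) * (t ^ (s.re - 1) * rexp (-p₀ * t))
  have hg : IntegrableOn g (Ioi X) :=
    (integrableOn_Ioi_rpow_mul_exp_neg_mul _ hp₀ hX).const_mul _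
  refine (h_sum.mul_right (∫ t in Ioi X, g t)).of_nonneg_of_le
    (fun i ↦ integral_nonneg fun _ ↦ norm_nonneg _) fun i ↦ ?_
  rw [mul_assoc, ← integral_const_mul, ← integral_const_mul]
  refine setIntegral_mono_on (integrableOn_Ioi_cpow_mul_mul_exp hp₀ hp hX s i).norm
    ((hg.const_mul _).const_mul _) measurableSet_Ioi fun t ht ↦ ?_
  rw [mul_left_comm, norm_mul, norm_ofReal_cpow_mul_exp _ (hX.trans ht), sub_re, one_re]
  have hexp := exp_neg_mul_le_exp_neg_mul_mul (hp i) (le_of_lt ht)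
  have ht' : 0 ≤ t ^ (s.re - 1) := rpow_nonneg (hX.trans ht).le _
  calc ‖a i‖ * (t ^ (s.re - 1) * rexp (-p i * t))
      ≤ ‖a i‖ * (t ^ (s.re - 1) * (rexp (-p i * X) * (rexp (p₀ * X) * rexp (-p₀ * t)))) := by
        gcongr
    _ = ‖a i‖ * (rexp (-p i * X) * g t) := by ring

theorem summable_norm_mul_iGamma_div (hp₀ : 0 < p₀) (hp : ∀ i, p₀ ≤ p i) (hX : 0 < X)
    (h_sum : Summable fun i ↦ ‖a i‖ * rexp (-p i * X)) (s : ℂ) :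
    Summable fun i ↦ ‖a i * (iGamma s (p i * X) / (p i : ℂ) ^ s)‖ :=
  (summable_integral_norm_cpow_mul_exp hp₀ hp hX h_sum s).of_nonneg_of_le
    (fun _ ↦ norm_nonneg _)
    fun i ↦ integral_Ioi_cpow_mul_mul_exp hp₀ hp hX s i ▸ norm_integral_le_integral_norm _

theorem hasSum_integral_Ioi_cpow_mul [Countable ι] {F : ℝ → ℂ} (hp₀ : 0 < p₀)
    (hp : ∀ i, p₀ ≤ p i) (hX : 0 < X)
    (hF : ∀ t ∈ Ioi X, HasSum (fun i ↦ a i * rexp (-p i * t)) (F t))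
    (h_sum : Summable fun i ↦ ‖a i‖ * rexp (-p i * X)) (s : ℂ) :
    IntegrableOn (fun t : ℝ ↦ (t : ℂ) ^ (s - 1) * F t) (Ioi X) ∧
      HasSum (fun i ↦ a i * (iGamma s (p i * X) / (p i : ℂ) ^ s))
        (∫ t in Ioi X, (t : ℂ) ^ (s - 1) * F t) := by
  have hF_int := integrableOn_Ioi_cpow_mul_mul_exp (a := a) hp₀ hp hX s
  have hF_sum := summable_integral_norm_cpow_mul_exp hp₀ hp hX h_sum s
  have hF_ae : ∀ᵐ t : ℝ ∂volume.restrict (Ioi X),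
      HasSum (fun i ↦ (t : ℂ) ^ (s - 1) * (a i * rexp (-p i * t))) ((t : ℂ) ^ (s - 1) * F t) :=
    (ae_restrict_iff' measurableSet_Ioi).2 (.of_forall fun t ht ↦ (hF t ht).mul_left _)
  refine ⟨integrable_of_hasSum_of_summable_integral_norm hF_int hF_sum hF_ae, ?_⟩
  rw [integral_congr_ae (hF_ae.mono fun t ht ↦ ht.tsum_eq.symm)]
  simpa only [integral_Ioi_cpow_mul_mul_exp hp₀ hp hX s] using
    hasSum_integral_of_summable_integral_norm hF_int hF_sum

end DirichletSeriesTail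

section InvChangeOfVariables

open scoped Pointwise

variable {E : Type*} [NormedAddCommGroup E] [NormedSpace ℝ E] {B : ℝ}

theorem image_inv_Ioi_inv (hB : 0 < B) : (fun u : ℝ ↦ u⁻¹) '' Ioi B⁻¹ = Ioo 0 B := by
  rw [image_inv_eq_inv, inv_Ioi₀ (inv_pos.2 hB), inv_inv]

theorem hasDerivWithinAt_inv_Ioi (hB : 0 < B) {u : ℝ} (hu : u ∈ Ioi B⁻¹) :
    HasDerivWithinAt (fun x : ℝ ↦ x⁻¹) (-(u ^ 2)⁻¹) (Ioi B⁻¹) u :=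
  (hasDerivAt_inv ((inv_pos.2 hB).trans hu).ne').hasDerivWithinAt

theorem integral_Ioo_zero_eq_integral_Ioi_inv (g : ℝ → E) (hB : 0 < B) :
    ∫ t in Ioo 0 B, g t = ∫ u in Ioi B⁻¹, (u ^ 2)⁻¹ • g u⁻¹ := by
  rw [← image_inv_Ioi_inv hB, integral_image_eq_integral_abs_deriv_smul measurableSet_Ioi
    (fun _ ↦ hasDerivWithinAt_inv_Ioi hB) inv_injective.injOn]
  simp_rw [abs_neg, abs_inv, abs_sq]

theorem integrableOn_Ioo_zero_iff_integrableOn_Ioi_inv (g : ℝ → E) (hB : 0 < B) :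
    IntegrableOn g (Ioo 0 B) ↔ IntegrableOn (fun u ↦ (u ^ 2)⁻¹ • g u⁻¹) (Ioi B⁻¹) := by
  rw [← image_inv_Ioi_inv hB, integrableOn_image_iff_integrableOn_abs_deriv_smul measurableSet_Ioi
    (fun _ ↦ hasDerivWithinAt_inv_Ioi hB) inv_injective.injOn]
  simp_rw [abs_neg, abs_inv, abs_sq]

end InvChangeOfVariables

theorem integral_Ioo_zero_cpow_sub_one {s : ℂ} (hs : 0 < s.re) {B : ℝ} (hB : 0 ≤ B) :
    ∫ t in Ioo 0 B, (t : ℂ) ^ (s - 1) = (B : ℂ) ^ s / s := by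
  rw [← integral_Ioc_eq_integral_Ioo, ← intervalIntegral.integral_of_le hB,
    integral_cpow (.inl (by simpa using hs)), sub_add_cancel, ofReal_zero,
    zero_cpow (by rintro rfl; simp at hs), sub_zero]

theorem integral_Ioi_inv_cpow_sub_one {a : ℂ} (ha : a.re < 0) {B : ℝ} (hB : 0 < B) :
    ∫ u in Ioi B⁻¹, (u : ℂ) ^ (a - 1) = -(B : ℂ) ^ (-a) / a := by
  rw [integral_Ioi_cpow_of_lt (by simp; linarith) (inv_pos.2 hB), sub_add_cancel, ofReal_inv,
    inv_cpow _ _ (by simp [arg_ofReal_of_nonneg hB.le, pi_ne_zero.symm]), ← cpow_neg]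

namespace IsModularForm

variable {k : ℤ} {f : ℂ → ℂ}

theorem apply_inv_mul_I (hf : IsModularForm k f) {t : ℝ} (ht : 0 < t) :
    f ((t : ℂ)⁻¹ * I) = I ^ k * (t : ℂ) ^ k * f (t * I) := by
  have h := hf.2.2.1 (t * I) (by simpa using ht)
  rwa [mul_inv, inv_I, mul_neg, neg_neg, mul_zpow, mul_comm ((t : ℂ) ^ k)] at h

theorem inv_sq_smul_cpow_mul_apply_inv (hf : IsModularForm k f) (s : ℂ) {u : ℝ} (hu : 0 < u) :
    (u ^ 2)⁻¹ • (((u⁻¹ : ℝ) : ℂ) ^ (s - 1) * f ((u⁻¹ : ℝ) * I))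
      = I ^ k * ((u : ℂ) ^ ((k : ℂ) - s - 1) * f (u * I)) := by
  have hu' : (u : ℂ) ≠ 0 := ofReal_ne_zero.2 hu.ne'
  have hexp : (u : ℂ) ^ ((k : ℂ) - s - 1)
      = ((u : ℂ) ^ 2)⁻¹ * ((u : ℂ) ^ (s - 1))⁻¹ * (u : ℂ) ^ k := by
    rw [← cpow_intCast, ← cpow_two, ← cpow_neg, ← cpow_neg, ← cpow_add _ _ hu', ← cpow_add _ _ hu']
    ring_nf
  rw [ofReal_inv, hf.apply_inv_mul_I hu, real_smul,
    inv_cpow _ _ (by simp [arg_ofReal_of_nonneg hu.le, pi_ne_zero.symm]), hexp]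
  push_cast
  ring

theorem integral_Ioo_cpow_mul (hf : IsModularForm k f) (s : ℂ) {B : ℝ} (hB : 0 < B) :
    ∫ t in Ioo 0 B, (t : ℂ) ^ (s - 1) * f (t * I)
      = I ^ k * ∫ u in Ioi B⁻¹, (u : ℂ) ^ ((k : ℂ) - s - 1) * f (u * I) := by
  rw [integral_Ioo_zero_eq_integral_Ioi_inv _ hB, ← integral_const_mul]
  exact setIntegral_congr_fun measurableSet_Ioi fun u hu ↦
    hf.inv_sq_smul_cpow_mul_apply_inv s ((inv_pos.2 hB).trans hu)

theorem integrableOn_Ioo_cpow_mul (hf : IsModularForm k f) (s : ℂ) {B : ℝ} (hB : 0 < B)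
    (h : IntegrableOn (fun u : ℝ ↦ (u : ℂ) ^ ((k : ℂ) - s - 1) * f (u * I)) (Ioi B⁻¹)) :
    IntegrableOn (fun t : ℝ ↦ (t : ℂ) ^ (s - 1) * f (t * I)) (Ioo 0 B) := by
  rw [integrableOn_Ioo_zero_iff_integrableOn_Ioi_inv _ hB]
  exact IntegrableOn.congr_fun (h.const_mul (I ^ k)) (fun u hu ↦
    (hf.inv_sq_smul_cpow_mul_apply_inv s ((inv_pos.2 hB).trans hu)).symm) measurableSet_Ioi

theorem integral_Ioi_cpow_mul_sub_const (hf : IsModularForm k f) (c₀ : ℂ) {B : ℝ} (hB : 0 < B)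
    {s : ℂ} (hs : 0 < s.re) (hks : (k : ℝ) < s.re)
    (h₁ : IntegrableOn (fun t : ℝ ↦ (t : ℂ) ^ (s - 1) * (f (t * I) - c₀)) (Ioi B))
    (h₂ : IntegrableOn (fun u : ℝ ↦ (u : ℂ) ^ ((k : ℂ) - s - 1) * (f (u * I) - c₀)) (Ioi B⁻¹)) :
    ∫ t in Ioi (0 : ℝ), (t : ℂ) ^ (s - 1) * (f (t * I) - c₀)
      = -c₀ * ((B : ℂ) ^ s / s + I ^ k * (B : ℂ) ^ (s - k) / (k - s))
        + (∫ t in Ioi B, (t : ℂ) ^ (s - 1) * (f (t * I) - c₀))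
        + I ^ k * ∫ u in Ioi B⁻¹, (u : ℂ) ^ ((k : ℂ) - s - 1) * (f (u * I) - c₀) := by
  have hks' : ((k : ℂ) - s).re < 0 := by simpa using hks
  have hc₀_tail_int : IntegrableOn (fun u : ℝ ↦ (u : ℂ) ^ ((k : ℂ) - s - 1) * c₀) (Ioi B⁻¹) :=
    (integrableOn_Ioi_cpow_of_lt (by simp; linarith) (inv_pos.2 hB)).mul_const _
  have hf_tail_int : IntegrableOn (fun u : ℝ ↦ (u : ℂ) ^ ((k : ℂ) - s - 1) * f (u * I)) (Ioi B⁻¹) :=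
    IntegrableOn.congr_fun (h₂.add hc₀_tail_int) (fun u _ ↦ by simp only [Pi.add_apply]; ring)
      measurableSet_Ioi
  have hc₀_head_int : IntegrableOn (fun t : ℝ ↦ (t : ℂ) ^ (s - 1) * c₀) (Ioo 0 B) :=
    ((intervalIntegral.intervalIntegrable_cpow' (by simpa using hs)).1.mono_set
      Ioo_subset_Ioc_self).mul_const _
  have hf_head_int := hf.integrableOn_Ioo_cpow_mul s hB hf_tail_int
  have hhead_int : IntegrableOn (fun t : ℝ ↦ (t : ℂ) ^ (s - 1) * (f (t * I) - c₀)) (Ioc 0 B) := by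
    rw [integrableOn_Ioc_iff_integrableOn_Ioo]
    exact IntegrableOn.congr_fun (hf_head_int.sub hc₀_head_int)
      (fun t _ ↦ by simp only [Pi.sub_apply]; ring) measurableSet_Ioo
  calc ∫ t in Ioi (0 : ℝ), (t : ℂ) ^ (s - 1) * (f (t * I) - c₀)
      = (∫ t in Ioo 0 B, (t : ℂ) ^ (s - 1) * f (t * I))
        - (∫ t in Ioo 0 B, (t : ℂ) ^ (s - 1) * c₀)
        + ∫ t in Ioi B, (t : ℂ) ^ (s - 1) * (f (t * I) - c₀) := by
        rw [← Ioc_union_Ioi_eq_Ioi hB.le, setIntegral_union (Ioc_disjoint_Ioi le_rfl)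
          measurableSet_Ioi hhead_int h₁, integral_Ioc_eq_integral_Ioo,
          ← integral_sub hf_head_int hc₀_head_int]
        congr 1
        exact setIntegral_congr_fun measurableSet_Ioo fun t _ ↦ by ring
    _ = I ^ k * ((∫ u in Ioi B⁻¹, (u : ℂ) ^ ((k : ℂ) - s - 1) * (f (u * I) - c₀))
          + ∫ u in Ioi B⁻¹, (u : ℂ) ^ ((k : ℂ) - s - 1) * c₀)
        - (∫ t in Ioo 0 B, (t : ℂ) ^ (s - 1) * c₀)
        + ∫ t in Ioi B, (t : ℂ) ^ (s - 1) * (f (t * I) - c₀) := by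
        rw [hf.integral_Ioo_cpow_mul s hB, ← integral_add h₂ hc₀_tail_int]
        congr 3
        exact setIntegral_congr_fun measurableSet_Ioi fun u _ ↦ by ring
    _ = _ := by
        rw [integral_mul_const, integral_mul_const, integral_Ioi_inv_cpow_sub_one hks' hB,
          integral_Ioo_zero_cpow_sub_one hs hB.le, neg_sub]
        ring

end IsModularForm

def HasQExpansion (f : ℂ → ℂ) (c : ℕ → ℂ) : Prop :=
  ∀ τ : ℂ, 0 < τ.im →
    Summable (fun n : ℕ => ‖c n * Complex.exp (2 * π * I * n * τ)‖) ∧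
    f τ = ∑' n : ℕ, c n * Complex.exp (2 * π * I * n * τ)

theorem exp_two_pi_I_mul_succ_mul_I (n : ℕ) (t : ℝ) :
    cexp (2 * π * I * ((n + 1 : ℕ) : ℂ) * (t * I)) = rexp (-(2 * π * ((n : ℝ) + 1)) * t) := by
  rw [ofReal_exp]
  push_cast
  congr 1
  linear_combination (2 * π * ((n : ℂ) + 1) * t) * I_mul_I

namespace HasQExpansion

variable {f : ℂ → ℂ} {c : ℕ → ℂ}

theorem summable_norm_coeff_succ_mul_exp (hc : HasQExpansion f c) {t : ℝ} (ht : 0 < t) :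
    Summable fun n : ℕ ↦ ‖c (n + 1)‖ * rexp (-(2 * π * ((n : ℝ) + 1)) * t) := by
  refine ((summable_nat_add_iff 1).2 (hc (t * I) (by simpa using ht)).1).congr fun n ↦ ?_
  rw [exp_two_pi_I_mul_succ_mul_I, norm_mul, norm_real, norm_of_nonneg (exp_pos _).le]

theorem hasSum_coeff_succ_mul_exp (hc : HasQExpansion f c) {t : ℝ} (ht : 0 < t) :
    HasSum (fun n : ℕ ↦ c (n + 1) * rexp (-(2 * π * ((n : ℝ) + 1)) * t)) (f (t * I) - c 0) := by
  obtain ⟨hsum, hf⟩ := hc (t * I) (by simpa using ht)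
  have h := (hasSum_nat_add_iff' 1).2 hsum.of_norm.hasSum
  simp only [Finset.sum_range_one, Nat.cast_zero, mul_zero, zero_mul, Complex.exp_zero, mul_one,
    ← hf, exp_two_pi_I_mul_succ_mul_I] at h
  exact h

end HasQExpansion

theorem stmt_6_general (k : ℤ) (hk0 : 0 ≤ k) (f : ℂ → ℂ)
    (hf : IsModularForm k f) (c : ℕ → ℂ)
    (hc : ∀ τ : ℂ, 0 < τ.im →
      Summable (fun n : ℕ => ‖c n * Complex.exp (2 * π * I * n * τ)‖) ∧
      f τ = ∑' n : ℕ, c n * Complex.exp (2 * π * I * n * τ))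
    (B : ℝ) (hB : 0 < B) :
    (∀ s : ℂ, Summable (fun n : ℕ =>
      ‖c (n + 1) * (iGamma s (2 * π * (n + 1) * B) / (2 * π * ((n : ℂ) + 1)) ^ s
        + I ^ k * iGamma ((k : ℂ) - s) (2 * π * (n + 1) / B)
            / (2 * π * ((n : ℂ) + 1)) ^ ((k : ℂ) - s))‖)) ∧
    ∀ s : ℂ, (k : ℝ) + 1 < s.re →
      ∫ t in Set.Ioi (0:ℝ), (t : ℂ) ^ (s - 1) * (f (t * I) - c 0)
        = -c 0 * ((B : ℂ) ^ s / s + I ^ k * (B : ℂ) ^ (s - (k : ℂ)) / ((k : ℂ) - s))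
          + ∑' n : ℕ, c (n + 1) *
              (iGamma s (2 * π * (n + 1) * B) / (2 * π * ((n : ℂ) + 1)) ^ s
                + I ^ k * iGamma ((k : ℂ) - s) (2 * π * (n + 1) / B)
                    / (2 * π * ((n : ℂ) + 1)) ^ ((k : ℂ) - s)) := by
  have hc : HasQExpansion f c := hc
  have hp (n : ℕ) : 2 * π ≤ 2 * π * ((n : ℝ) + 1) :=
    le_mul_of_one_le_right two_pi_pos.le (by simp)
  have hsum {X : ℝ} (hX : 0 < X) := hc.summable_norm_coeff_succ_mul_exp hX
  have hcast (n : ℕ) : (2 * π * ((n : ℂ) + 1)) = ((2 * π * ((n : ℝ) + 1) : ℝ) : ℂ) := by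
    push_cast; rfl
  have hB' : 0 < B⁻¹ := inv_pos.2 hB
  have hIk : ‖(I : ℂ) ^ k‖ = 1 := by rw [norm_zpow, norm_I, one_zpow]
  refine ⟨fun s ↦ ?_, fun s hs ↦ ?_⟩
  · refine ((summable_norm_mul_iGamma_div two_pi_pos hp hB (hsum hB) s).add
      (summable_norm_mul_iGamma_div two_pi_pos hp hB' (hsum hB') ((k : ℂ) - s))).of_nonneg_of_le
      (fun _ ↦ norm_nonneg _) fun n ↦ ?_
    rw [mul_add]
    refine (norm_add_le _ _).trans_eq ?_
    simp only [hcast, norm_mul, hIk, div_eq_mul_inv]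
    ring
  · have hk : (0 : ℝ) ≤ k := Int.cast_nonneg hk0
    obtain ⟨h₁, hs₁⟩ := hasSum_integral_Ioi_cpow_mul two_pi_pos hp hB
      (fun t ht ↦ hc.hasSum_coeff_succ_mul_exp (hB.trans ht)) (hsum hB) s
    obtain ⟨h₂, hs₂⟩ := hasSum_integral_Ioi_cpow_mul two_pi_pos hp hB'
      (fun t ht ↦ hc.hasSum_coeff_succ_mul_exp (hB'.trans ht)) (hsum hB') (k - s)
    rw [hf.integral_Ioi_cpow_mul_sub_const (c 0) hB (by linarith) (by linarith) h₁ h₂,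
      ← hs₁.tsum_eq, ← hs₂.tsum_eq, ← tsum_mul_left, add_assoc,
      ← hs₁.summable.tsum_add (hs₂.summable.mul_left _)]
    congr 2 with n
    simp only [hcast, div_eq_mul_inv]
    ring

/-- the incomplete-gamma expansion of the L-integral of a level-one
holomorphic modular form of even weight `k ≥ 0`, with reflection point `B > 0`. -/
theorem stmt_6 (k : ℤ) (hk0 : 0 ≤ k) (hke : Even k) (f : ℂ → ℂ)
    (hf : IsModularForm k f) (c : ℕ → ℂ)
    (hc : ∀ τ : ℂ, 0 < τ.im →
      Summable (fun n : ℕ => ‖c n * Complex.exp (2 * π * I * n * τ)‖) ∧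
      f τ = ∑' n : ℕ, c n * Complex.exp (2 * π * I * n * τ))
    (B : ℝ) (hB : 0 < B) :
    (∀ s : ℂ, Summable (fun n : ℕ =>
      ‖c (n + 1) * (iGamma s (2 * π * (n + 1) * B) / (2 * π * ((n : ℂ) + 1)) ^ s
        + I ^ k * iGamma ((k : ℂ) - s) (2 * π * (n + 1) / B)
            / (2 * π * ((n : ℂ) + 1)) ^ ((k : ℂ) - s))‖)) ∧
    ∀ s : ℂ, (k : ℝ) + 1 < s.re →
      ∫ t in Set.Ioi (0:ℝ), (t : ℂ) ^ (s - 1) * (f (t * I) - c 0)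
        = -c 0 * ((B : ℂ) ^ s / s + I ^ k * (B : ℂ) ^ (s - (k : ℂ)) / ((k : ℂ) - s))
          + ∑' n : ℕ, c (n + 1) *
              (iGamma s (2 * π * (n + 1) * B) / (2 * π * ((n : ℂ) + 1)) ^ s
                + I ^ k * iGamma ((k : ℂ) - s) (2 * π * (n + 1) / B)
                    / (2 * π * ((n : ℂ) + 1)) ^ ((k : ℂ) - s)) :=
  stmt_6_general k hk0 f hf c hc B hB
end

section
/- Let B > 0, let 0 < β < B, and let c : ℕ → ℂ satisfy |c(n)| ≤ e^{2πnβ} for all sufficiently large n. Then for every s ∈ ℂ: (i) the series Σ_{n≥1} c(n) Γ(s, 2πnB)/(2πn)^s converges absolutely; and (ii) the function t ↦ Σ_{n≥1} c(n) e^{−2πnt} converges absolutely for every t ≥ B, the integral ∫_B^∞ t^{s−1} (Σ_{n≥1} c(n) e^{−2πnt}) dt converges absolutely, and it equals Σ_{n≥1} c(n) Γ(s, 2πnB)/(2πn)^s. -/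
open Complex Real Filter Topology MeasureTheory

/-!
By the substitution `u = a t`, the term `t^(s-1) e^(-a t)` integrates over `(B, ∞)` to
`Γ(s, a B) / a^s`. For `t ≥ B` one has `e^(-2π(n+1)t) ≤ e^(-2πnB) e^(-2πt)`, so the `L¹` norm of the
`n`-th term is at most `‖c(n+1)‖ e^(-2πnB)` times one fixed convergent integral; since `β < B` these
bounds decay geometrically. Summable `L¹` norms allow integrating the series term by term.
-/

open Set

theorem integrable_tsum_of_summable_integral_norm {α E : Type*} [MeasurableSpace α]
    {μ : Measure α} [NormedAddCommGroup E] [CompleteSpace E] {F : ℕ → α → E}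
    (hF_int : ∀ i, Integrable (F i) μ) (hF_sum : Summable fun i ↦ ∫ a, ‖F i a‖ ∂μ) :
    Integrable (fun a ↦ ∑' i, F i a) μ := by
  have h_lintegral (i : ℕ) : ∫⁻ a, ‖F i a‖ₑ ∂μ = ENNReal.ofReal (∫ a, ‖F i a‖ ∂μ) :=
    (ofReal_integral_norm_eq_lintegral_enorm (hF_int i)).symm
  have h_finite : ∑' i, ∫⁻ a, ‖F i a‖ₑ ∂μ ≠ ⊤ := by
    rw [tsum_congr h_lintegral, ← ENNReal.ofReal_tsum_of_nonneg
      (fun i ↦ integral_nonneg fun a ↦ norm_nonneg _) hF_sum]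
    exact ENNReal.ofReal_ne_top
  have h_summable : ∀ᵐ a ∂μ, Summable fun i ↦ ‖F i a‖ :=
    summable_norm_of_tsum_eLpNorm_ne_top le_rfl (fun i ↦ (hF_int i).1)
      (by simpa only [eLpNorm_one_eq_lintegral_enorm] using h_finite)
  refine ⟨aestronglyMeasurable_of_tendsto_ae atTop (fun N ↦ Finset.aestronglyMeasurable_fun_sum
    (Finset.range N) fun i _ ↦ (hF_int i).1) ?_, ?_⟩
  · filter_upwards [h_summable] with a ha
    exact ha.of_norm.hasSum.tendsto_sum_nat
  · calc ∫⁻ a, ‖∑' i, F i a‖ₑ ∂μ ≤ ∫⁻ a, ∑' i, ‖F i a‖ₑ ∂μ :=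
          lintegral_mono fun a ↦ enorm_tsum_le_tsum_enorm
      _ = ∑' i, ∫⁻ a, ‖F i a‖ₑ ∂μ := lintegral_tsum fun i ↦ (hF_int i).1.enorm
      _ < ⊤ := h_finite.lt_top

theorem summable_norm_mul_exp_neg_of_norm_le_exp {E : Type*} [SeminormedAddCommGroup E]
    {c : ℕ → E} {β t : ℝ} (hc : ∀ᶠ n : ℕ in atTop, ‖c n‖ ≤ rexp (n * β)) (hβt : β < t) :
    Summable fun n : ℕ ↦ ‖c n‖ * rexp (-(n * t)) := by
  refine summable_of_isBigO_nat (summable_geometric_of_lt_one (exp_nonneg (β - t))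
    (exp_lt_one_iff.2 (sub_neg.2 hβt))) (Asymptotics.IsBigO.of_bound 1 ?_)
  filter_upwards [hc] with n hn
  rw [one_mul, norm_of_nonneg (by positivity), norm_of_nonneg (by positivity), ← Real.exp_nat_mul]
  calc ‖c n‖ * rexp (-(n * t)) ≤ rexp (n * β) * rexp (-(n * t)) := by gcongr
    _ = rexp (n * (β - t)) := by rw [← Real.exp_add]; ring_nf

theorem summable_norm_succ_mul_exp_neg_two_pi_mul {E : Type*} [SeminormedAddCommGroup E]
    {c : ℕ → E} {β t : ℝ} (hc : ∀ᶠ n : ℕ in atTop, ‖c n‖ ≤ rexp (2 * π * n * β)) (hβt : β < t) :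
    Summable fun n : ℕ ↦ ‖c (n + 1)‖ * rexp (-(2 * π * (n + 1) * t)) := by
  have hc' : ∀ᶠ n : ℕ in atTop, ‖c n‖ ≤ rexp (n * (2 * π * β)) := by
    filter_upwards [hc] with n hn
    rwa [mul_left_comm, ← mul_assoc]
  refine ((summable_nat_add_iff 1).2 (summable_norm_mul_exp_neg_of_norm_le_exp hc'
    (by gcongr : 2 * π * β < 2 * π * t))).congr fun n ↦ ?_
  push_cast
  ring_nf

theorem integrableOn_Ioi_rpow_mul_exp_neg_mul_s7 (σ : ℝ) {x a : ℝ} (hx : 0 < x) (ha : 0 < a) :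
    IntegrableOn (fun u : ℝ ↦ u ^ σ * rexp (-(a * u))) (Ioi x) := by
  refine integrable_of_isBigO_exp_neg (half_pos ha) (ContinuousOn.mul
    (continuousOn_id.rpow_const fun u hu ↦ Or.inl (hx.trans_le hu).ne') (by fun_prop)) ?_
  have h := ((isLittleO_rpow_exp_pos_mul_atTop σ (half_pos ha)).mul_isBigO
    (Asymptotics.isBigO_refl (fun u : ℝ ↦ rexp (-(a * u))) atTop)).isBigO
  refine h.congr_right fun u ↦ ?_
  rw [← Real.exp_add]
  ring_nf

theorem norm_cpow_mul_cexp_neg_mul (s : ℂ) (a : ℝ) {t : ℝ} (ht : 0 < t) :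
    ‖(t : ℂ) ^ (s - 1) * cexp (-(a * t))‖ = t ^ (s.re - 1) * rexp (-(a * t)) := by
  rw [norm_mul, norm_cpow_eq_rpow_re_of_pos ht, ← ofReal_mul, ← ofReal_neg, norm_exp_ofReal,
    sub_re, one_re]

theorem integrableOn_Ioi_cpow_mul_cexp_neg_mul (s : ℂ) {x a : ℝ} (hx : 0 < x) (ha : 0 < a) :
    IntegrableOn (fun u : ℝ ↦ (u : ℂ) ^ (s - 1) * cexp (-(a * u))) (Ioi x) := by
  have hcont : ContinuousOn (fun u : ℝ ↦ (u : ℂ) ^ (s - 1) * cexp (-(a * u))) (Ioi x) :=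
    fun u hu ↦ ((continuousAt_cpow_const (ofReal_mem_slitPlane.2 (hx.trans hu))).comp
      continuous_ofReal.continuousAt |>.mul (by fun_prop)).continuousWithinAt
  refine (integrableOn_Ioi_rpow_mul_exp_neg_mul_s7 (s.re - 1) hx ha).mono'
    (hcont.aestronglyMeasurable measurableSet_Ioi) ?_
  filter_upwards [self_mem_ae_restrict measurableSet_Ioi] with u hu
  exact (norm_cpow_mul_cexp_neg_mul s a (hx.trans hu)).le

theorem setIntegral_Ioi_cpow_mul_cexp_neg_mul (s : ℂ) {x a : ℝ} (hx : 0 < x) (ha : 0 < a) :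
    ∫ t in Ioi x, (t : ℂ) ^ (s - 1) * cexp (-(a * t)) = iGamma s (a * x) / (a : ℂ) ^ s := by
  have ha' : (a : ℂ) ≠ 0 := ofReal_ne_zero.2 ha.ne'
  have hsub := integral_comp_mul_left_Ioi
    (fun u : ℝ ↦ (u : ℂ) ^ (s - 1) * cexp (-(u : ℂ))) x ha
  have hscale : ∀ t ∈ Ioi x, ((a * t : ℝ) : ℂ) ^ (s - 1) * cexp (-((a * t : ℝ) : ℂ))
      = (a : ℂ) ^ (s - 1) * ((t : ℂ) ^ (s - 1) * cexp (-(a * t))) := fun t ht ↦ by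
    rw [ofReal_mul, mul_cpow_ofReal_nonneg ha.le (hx.trans ht).le, mul_assoc]
  rw [setIntegral_congr_fun measurableSet_Ioi hscale, integral_const_mul, real_smul,
    ofReal_inv, ← iGamma] at hsub
  have hpow : (a : ℂ) ^ s = (a : ℂ) ^ (s - 1) * a := by
    rw [cpow_sub _ _ ha', cpow_one, div_mul_cancel₀ _ ha']
  rw [eq_div_iff (cpow_ne_zero_iff.2 (Or.inl ha')), hpow]
  field_simp at hsub
  linear_combination hsub

section ExpSeries

variable {a : ℕ → ℝ} {a₀ x : ℝ} {b : ℕ → ℂ}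

theorem summable_integral_norm_mul_cpow_mul_cexp (s : ℂ) (hx : 0 < x) (ha₀ : 0 < a₀)
    (ha : ∀ n, a₀ ≤ a n) (hb : Summable fun n ↦ ‖b n‖ * rexp (-(a n * x))) :
    Summable fun n ↦ ∫ t in Ioi x, ‖b n * ((t : ℂ) ^ (s - 1) * cexp (-(a n * t)))‖ := by
  set K := ∫ t in Ioi x, t ^ (s.re - 1) * rexp (-(a₀ * t))
  have hK := integrableOn_Ioi_rpow_mul_exp_neg_mul_s7 (s.re - 1) hx ha₀
  refine (hb.mul_right (rexp (a₀ * x) * K)).of_nonneg_of_le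
    (fun n ↦ setIntegral_nonneg measurableSet_Ioi fun t _ ↦ norm_nonneg _) fun n ↦ ?_
  rw [← mul_assoc, ← integral_const_mul]
  refine setIntegral_mono_on ((integrableOn_Ioi_cpow_mul_cexp_neg_mul s hx
    (ha₀.trans_le (ha n))).const_mul (b n)).norm (hK.const_mul _) measurableSet_Ioi fun t ht ↦ ?_
  have hexp : rexp (-(a n * t)) ≤ rexp (-(a n * x)) * (rexp (a₀ * x) * rexp (-(a₀ * t))) := by
    rw [← Real.exp_add, ← Real.exp_add]
    exact exp_le_exp.2 (by nlinarith [ha n, mem_Ioi.1 ht])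
  rw [norm_mul, norm_cpow_mul_cexp_neg_mul s _ (hx.trans ht)]
  calc ‖b n‖ * (t ^ (s.re - 1) * rexp (-(a n * t)))
      ≤ ‖b n‖ * (t ^ (s.re - 1) * (rexp (-(a n * x)) * (rexp (a₀ * x) * rexp (-(a₀ * t))))) := by
        gcongr
        exact rpow_nonneg (hx.trans ht).le _
    _ = _ := by ring

theorem cpow_mul_tsum_mul_cexp (s : ℂ) (t : ℝ) :
    (t : ℂ) ^ (s - 1) * ∑' n, b n * cexp (-(a n * t))
      = ∑' n, b n * ((t : ℂ) ^ (s - 1) * cexp (-(a n * t))) := by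
  rw [← tsum_mul_left]
  exact tsum_congr fun n ↦ mul_left_comm _ _ _

theorem summable_norm_mul_iGamma_div_cpow (s : ℂ) (hx : 0 < x) (ha₀ : 0 < a₀)
    (ha : ∀ n, a₀ ≤ a n) (hb : Summable fun n ↦ ‖b n‖ * rexp (-(a n * x))) :
    Summable fun n ↦ ‖b n * iGamma s (a n * x) / (a n : ℂ) ^ s‖ := by
  refine (summable_integral_norm_mul_cpow_mul_cexp s hx ha₀ ha hb).of_nonneg_of_le
    (fun n ↦ norm_nonneg _) fun n ↦ ?_
  rw [mul_div_assoc, ← setIntegral_Ioi_cpow_mul_cexp_neg_mul s hx (ha₀.trans_le (ha n)),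
    ← integral_const_mul]
  exact norm_integral_le_integral_norm _

theorem integrableOn_cpow_mul_tsum_mul_cexp (s : ℂ) (hx : 0 < x) (ha₀ : 0 < a₀)
    (ha : ∀ n, a₀ ≤ a n) (hb : Summable fun n ↦ ‖b n‖ * rexp (-(a n * x))) :
    IntegrableOn (fun t : ℝ ↦ (t : ℂ) ^ (s - 1) * ∑' n, b n * cexp (-(a n * t))) (Ioi x) := by
  simp_rw [cpow_mul_tsum_mul_cexp]
  exact integrable_tsum_of_summable_integral_norm
    (fun n ↦ (integrableOn_Ioi_cpow_mul_cexp_neg_mul s hx (ha₀.trans_le (ha n))).const_mul _)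
    (summable_integral_norm_mul_cpow_mul_cexp s hx ha₀ ha hb)

theorem setIntegral_cpow_mul_tsum_mul_cexp (s : ℂ) (hx : 0 < x) (ha₀ : 0 < a₀)
    (ha : ∀ n, a₀ ≤ a n) (hb : Summable fun n ↦ ‖b n‖ * rexp (-(a n * x))) :
    ∫ t in Ioi x, (t : ℂ) ^ (s - 1) * ∑' n, b n * cexp (-(a n * t))
      = ∑' n, b n * iGamma s (a n * x) / (a n : ℂ) ^ s := by
  simp_rw [cpow_mul_tsum_mul_cexp, ← integral_tsum_of_summable_integral_norm
    (fun n ↦ (integrableOn_Ioi_cpow_mul_cexp_neg_mul s hx (ha₀.trans_le (ha n))).const_mul _)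
    (summable_integral_norm_mul_cpow_mul_cexp s hx ha₀ ha hb)]
  refine tsum_congr fun n ↦ ?_
  rw [integral_const_mul, setIntegral_Ioi_cpow_mul_cexp_neg_mul s hx (ha₀.trans_le (ha n)),
    mul_div_assoc]

end ExpSeries

/-- for coefficients of subcritical exponential growth
`|c(n)| ≤ e^{2πnβ}` with `β < B`, the incomplete-gamma series converges
absolutely for every `s`, and computes the Mellin-type integral over `(B, ∞)`. -/
theorem stmt_7 (B β : ℝ) (hβ : 0 < β) (hβB : β < B) (c : ℕ → ℂ)
    (hc : ∀ᶠ n : ℕ in atTop, ‖c n‖ ≤ Real.exp (2 * π * n * β)) (s : ℂ) :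
    Summable (fun n : ℕ =>
      ‖c (n + 1) * iGamma s (2 * π * (n + 1) * B) / (2 * π * ((n : ℂ) + 1)) ^ s‖) ∧
    (∀ t : ℝ, B ≤ t →
      Summable (fun n : ℕ => ‖c (n + 1) * Complex.exp (-(2 * π * ((n : ℝ) + 1) * t))‖)) ∧
    IntegrableOn (fun t : ℝ =>
      (t : ℂ) ^ (s - 1) * ∑' n : ℕ, c (n + 1) * Complex.exp (-(2 * π * ((n : ℝ) + 1) * t)))
      (Set.Ioi B) ∧
    ∫ t in Set.Ioi B,
        (t : ℂ) ^ (s - 1) * ∑' n : ℕ, c (n + 1) * Complex.exp (-(2 * π * ((n : ℝ) + 1) * t))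
      = ∑' n : ℕ, c (n + 1) * iGamma s (2 * π * (n + 1) * B)
          / (2 * π * ((n : ℂ) + 1)) ^ s := by
  have hB : 0 < B := hβ.trans hβB
  have h2π : (0 : ℝ) < 2 * π := by positivity
  set a : ℕ → ℝ := fun n ↦ 2 * π * (n + 1)
  have ha (n : ℕ) : 2 * π ≤ a n := le_mul_of_one_le_right h2π.le (by simp)
  have hb : Summable fun n ↦ ‖c (n + 1)‖ * rexp (-(a n * B)) :=
    summable_norm_succ_mul_exp_neg_two_pi_mul hc hβB
  have hexp (n : ℕ) (t : ℝ) : cexp (-(2 * π * ((n : ℝ) + 1) * t)) = cexp (-(a n * t)) := by simp [a]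
  have hpow (n : ℕ) : (2 * π * ((n : ℂ) + 1)) ^ s = (a n : ℂ) ^ s := by simp [a]
  simp only [hexp, hpow]
  refine ⟨summable_norm_mul_iGamma_div_cpow s hB h2π ha hb, fun t ht ↦ ?_,
    integrableOn_cpow_mul_tsum_mul_cexp s hB h2π ha hb,
    setIntegral_cpow_mul_tsum_mul_cexp s hB h2π ha hb⟩
  simpa only [norm_mul, ← ofReal_mul, ← ofReal_neg, norm_exp_ofReal] using
    summable_norm_succ_mul_exp_neg_two_pi_mul hc (hβB.trans_le ht)
end

section
/- Let f = g/h be a meromorphic modular form of weight k for SL(2,ℤ) such that h(it) ≠ 0 for every t > 0, and suppose f is regular at the cusp: there exist T > 0 and c : ℕ → ℂ such that h(τ) ≠ 0 and f(τ) = Σ_{n≥0} c(n) e^{2πinτ} (absolutely convergent) for all τ with Im τ > T. Then for every s ∈ ℂ with Re(s) > max(k, 0), the integral ∫₀^∞ t^{s−1}(f(it) − c(0)) dt converges absolutely. -/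
/-!
On the imaginary axis `q = e^{-2πt}`, so the `q`-expansion gives `f(it) - c(0) = O(e^{-2πt})`
as `t → ∞`, and in particular `f(it)` is bounded there. The weight-`k` law of `f = g/h` on
the axis reads `f(it) = (it)^{-k} f(i/t)`, hence `f(it) = O(t^{-k})` and
`f(it) - c(0) = O(t^{-max(k,0)})` as `t → 0⁺`. These two growth bounds are exactly the
hypotheses of the standard Mellin convergence criterion for `max(k,0) < Re s`.
-/
open Complex Real Filter Topology MeasureTheory

open Asymptotics

lemma continuousOn_comp_ofReal_mul_I {g : ℂ → ℂ} (hg : ContinuousOn g {z : ℂ | 0 < z.im}) :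
    ContinuousOn (fun t : ℝ => g (t * I)) (Set.Ioi 0) :=
  hg.comp (by fun_prop) fun t ht => by simpa using ht

lemma div_neg_inv_eq_zpow_mul {k₁ k₂ : ℤ} {g h : ℂ → ℂ}
    (hg : ∀ z : ℂ, 0 < z.im → g (-z⁻¹) = z ^ k₁ * g z)
    (hh : ∀ z : ℂ, 0 < z.im → h (-z⁻¹) = z ^ k₂ * h z) (z : ℂ) (hz : 0 < z.im) :
    g (-z⁻¹) / h (-z⁻¹) = z ^ (k₁ - k₂) * (g z / h z) := by
  have hz0 : z ≠ 0 := fun h0 => by simp [h0] at hz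
  rw [hg z hz, hh z hz, mul_div_mul_comm, zpow_sub₀ hz0]

lemma neg_inv_ofReal_inv_mul_I (t : ℝ) : -(((t⁻¹ : ℝ) : ℂ) * I)⁻¹ = t * I := by
  rw [mul_inv, Complex.ofReal_inv, inv_inv, Complex.inv_I]
  ring

lemma isBigO_rpow_nhdsGT_zero_of_le {a b : ℝ} (hab : b ≤ a) :
    (fun t : ℝ => t ^ a) =O[𝓝[>] 0] fun t => t ^ b := by
  refine IsBigO.of_bound 1 ?_
  filter_upwards [Ioo_mem_nhdsGT one_pos] with t ⟨ht0, ht1⟩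
  rw [one_mul, Real.norm_of_nonneg (by positivity), Real.norm_of_nonneg (by positivity)]
  exact Real.rpow_le_rpow_of_exponent_ge ht0 ht1.le hab

lemma isBigO_nhdsGT_zero_of_neg_inv {k : ℤ} {f : ℂ → ℂ}
    (hf : ∀ z : ℂ, 0 < z.im → f (-z⁻¹) = z ^ k * f z)
    (hbdd : (fun u : ℝ => f (u * I)) =O[atTop] fun _ => (1 : ℝ)) :
    (fun t : ℝ => f (t * I)) =O[𝓝[>] 0] fun t => t ^ (-(k : ℝ)) := by
  have hinv := hbdd.comp_tendsto tendsto_inv_nhdsGT_zero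
  have hpow :
      (fun t : ℝ => (((t⁻¹ : ℝ) : ℂ) * I) ^ k) =O[𝓝[>] 0] fun t => t ^ (-(k : ℝ)) := by
    refine IsBigO.of_bound 1 ?_
    filter_upwards [self_mem_nhdsWithin] with t (ht : 0 < t)
    rw [one_mul, norm_zpow, norm_mul, Complex.norm_I, mul_one, Complex.norm_real,
      Real.norm_of_nonneg (by positivity), Real.norm_of_nonneg (by positivity),
      Real.rpow_neg ht.le, Real.rpow_intCast, inv_zpow]
  refine ((hpow.mul hinv).congr' ?_ ?_)
  · filter_upwards [self_mem_nhdsWithin] with t (ht : 0 < t)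
    rw [Function.comp_apply, ← hf _ (by simpa using ht), neg_inv_ofReal_inv_mul_I]
  · filter_upwards with t using mul_one _

lemma norm_tsum_mul_pow_sub_le {a : ℕ → ℂ} {r x : ℝ} (hr : 0 < r)
    (ha : Summable fun n => ‖a n‖ * r ^ n) (hx0 : 0 ≤ x) (hxr : x ≤ r) :
    ‖(∑' n, a n * (x : ℂ) ^ n) - a 0‖ ≤ (∑' n, ‖a n‖ * r ^ n) / r * x := by
  have hterm (n : ℕ) : ‖a n * (x : ℂ) ^ n‖ = ‖a n‖ * x ^ n := by
    rw [norm_mul, norm_pow, Complex.norm_real, Real.norm_of_nonneg hx0]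
  have hsx : Summable fun n => ‖a n * (x : ℂ) ^ n‖ :=
    ha.of_nonneg_of_le (fun _ => norm_nonneg _) fun n => by rw [hterm]; gcongr
  have htail (n : ℕ) :
      ‖a (n + 1) * (x : ℂ) ^ (n + 1)‖ ≤ ‖a (n + 1)‖ * r ^ (n + 1) * (x / r) := by
    rw [hterm, pow_succ, pow_succ, mul_assoc, mul_assoc, mul_div_cancel₀ x hr.ne']
    gcongr
  have htail_le : ∑' n, ‖a (n + 1)‖ * r ^ (n + 1) ≤ ∑' n, ‖a n‖ * r ^ n := by
    rw [ha.tsum_eq_zero_add]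
    exact le_add_of_nonneg_left (by positivity)
  calc ‖(∑' n, a n * (x : ℂ) ^ n) - a 0‖
      = ‖∑' n, a (n + 1) * (x : ℂ) ^ (n + 1)‖ := by
        rw [hsx.of_norm.tsum_eq_zero_add, pow_zero, mul_one, add_sub_cancel_left]
    _ ≤ ∑' n, ‖a (n + 1) * (x : ℂ) ^ (n + 1)‖ :=
        norm_tsum_le_tsum_norm ((summable_nat_add_iff 1).2 hsx)
    _ ≤ ∑' n, ‖a (n + 1)‖ * r ^ (n + 1) * (x / r) :=
        ((summable_nat_add_iff 1).2 hsx).tsum_le_tsum htail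
          (((summable_nat_add_iff 1).2 ha).mul_right _)
    _ = (∑' n, ‖a (n + 1)‖ * r ^ (n + 1)) / r * x := by rw [tsum_mul_right]; ring
    _ ≤ (∑' n, ‖a n‖ * r ^ n) / r * x := by gcongr

lemma cexp_two_pi_I_mul_nat_mul_ofReal_mul_I (n : ℕ) (u : ℝ) :
    cexp (2 * π * I * n * (u * I)) = (Real.exp (-(2 * π) * u) : ℂ) ^ n := by
  rw [Complex.ofReal_exp, ← Complex.exp_nat_mul]
  push_cast
  ring_nf
  rw [I_sq]
  ring_nf

lemma isBigO_exp_of_qExpansion {f : ℂ → ℂ} {c : ℕ → ℂ} {T : ℝ}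
    (hq : ∀ τ : ℂ, T < τ.im →
      Summable (fun n : ℕ => ‖c n * cexp (2 * π * I * n * τ)‖) ∧
      f τ = ∑' n : ℕ, c n * cexp (2 * π * I * n * τ)) :
    (fun u : ℝ => f (u * I) - c 0) =O[atTop] fun u => Real.exp (-(2 * π) * u) := by
  set r := Real.exp (-(2 * π) * (T + 1))
  have hsum : Summable fun n => ‖c n‖ * r ^ n := by
    simpa only [cexp_two_pi_I_mul_nat_mul_ofReal_mul_I, norm_mul, norm_pow, Complex.norm_real,
      Real.norm_of_nonneg (Real.exp_pos _).le] using (hq ((T + 1 : ℝ) * I) (by simp)).1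
  refine IsBigO.of_bound ((∑' n, ‖c n‖ * r ^ n) / r) ?_
  filter_upwards [eventually_ge_atTop (T + 1)] with u hu
  have hur : Real.exp (-(2 * π) * u) ≤ r := Real.exp_le_exp.2 (by nlinarith [Real.pi_pos])
  rw [(hq _ (by simp; linarith)).2, Real.norm_of_nonneg (Real.exp_pos _).le]
  simp only [cexp_two_pi_I_mul_nat_mul_ofReal_mul_I]
  exact norm_tsum_mul_pow_sub_le (Real.exp_pos _) hsum (Real.exp_pos _).le hur

theorem stmt_8_general (k₁ k₂ k : ℤ) (g h f : ℂ → ℂ)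
    (hg : IsModularForm k₁ g) (hh : IsModularForm k₂ h)
    (hk : k = k₁ - k₂)
    (hf : ∀ z : ℂ, f z = g z / h z)
    (haxis : ∀ t : ℝ, 0 < t → h (t * I) ≠ 0)
    (T : ℝ) (c : ℕ → ℂ)
    (hcusp : ∀ τ : ℂ, T < τ.im → h τ ≠ 0 ∧
      Summable (fun n : ℕ => ‖c n * Complex.exp (2 * π * I * n * τ)‖) ∧
      f τ = ∑' n : ℕ, c n * Complex.exp (2 * π * I * n * τ)) :
    ∀ s : ℂ, max (k : ℝ) 0 < s.re →
      IntegrableOn (fun t : ℝ => (t : ℂ) ^ (s - 1) * (f (t * I) - c 0)) (Set.Ioi 0) := by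
  intro s hs
  have hdecay := isBigO_exp_of_qExpansion fun τ hτ => (hcusp τ hτ).2
  obtain rfl : f = fun z => g z / h z := funext hf
  have hbdd : (fun u : ℝ => g (u * I) / h (u * I)) =O[atTop] fun _ => (1 : ℝ) := by
    have hexp := (isLittleO_exp_neg_mul_rpow_atTop Real.two_pi_pos 0).isBigO
    simp only [Real.rpow_zero] at hexp
    simpa using (hdecay.trans hexp).add (isBigO_const_const (c 0) one_ne_zero atTop)
  have hzero : (fun t : ℝ => g (t * I) / h (t * I)) =O[𝓝[>] 0] fun t => t ^ (-(k : ℝ)) :=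
    hk ▸ isBigO_nhdsGT_zero_of_neg_inv (f := fun z => g z / h z)
      (div_neg_inv_eq_zpow_mul hg.2.2.1 hh.2.2.1) hbdd
  refine mellinConvergent_of_isBigO_rpow (a := s.re + 1) (b := max k 0) ?_ ?_ (by linarith) ?_
    hs
  · exact (((continuousOn_comp_ofReal_mul_I hg.1.continuousOn).div
      (continuousOn_comp_ofReal_mul_I hh.1.continuousOn) haxis).sub
      continuousOn_const).locallyIntegrableOn measurableSet_Ioi
  · exact hdecay.trans (isLittleO_exp_neg_mul_rpow_atTop Real.two_pi_pos _).isBigO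
  · have hconst : (fun _ : ℝ => c 0) =O[𝓝[>] 0] fun t : ℝ => t ^ (-(0 : ℝ)) := by
      simpa using isBigO_const_const (c 0) (one_ne_zero (α := ℝ)) (𝓝[>] (0 : ℝ))
    exact (hzero.trans (isBigO_rpow_nhdsGT_zero_of_le (by simp))).sub
      (hconst.trans (isBigO_rpow_nhdsGT_zero_of_le (by simp)))

/-- the regularized L-integral of a meromorphic modular form `f = g/h`
without poles on the positive imaginary axis which is regular at the cusp
converges absolutely for `Re s > max(k, 0)`. -/
theorem stmt_8 (k₁ k₂ k : ℤ) (g h f : ℂ → ℂ)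
    (hg : IsModularForm k₁ g) (hh : IsModularForm k₂ h)
    (hhne : ∃ z : ℂ, 0 < z.im ∧ h z ≠ 0)
    (hk : k = k₁ - k₂)
    (hf : ∀ z : ℂ, f z = g z / h z)
    (haxis : ∀ t : ℝ, 0 < t → h (t * I) ≠ 0)
    (T : ℝ) (hT : 0 < T) (c : ℕ → ℂ)
    (hcusp : ∀ τ : ℂ, T < τ.im → h τ ≠ 0 ∧
      Summable (fun n : ℕ => ‖c n * Complex.exp (2 * π * I * n * τ)‖) ∧
      f τ = ∑' n : ℕ, c n * Complex.exp (2 * π * I * n * τ)) :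
    ∀ s : ℂ, max (k : ℝ) 0 < s.re →
      IntegrableOn (fun t : ℝ => (t : ℂ) ^ (s - 1) * (f (t * I) - c 0)) (Set.Ioi 0) :=
  stmt_8_general k₁ k₂ k g h f hg hh hk hf haxis T c hcusp
end

section
/- Let f = g/h be a meromorphic modular form of even weight k for SL(2,ℤ) such that h(it) ≠ 0 for every t > 0, and suppose f is regular at the cusp: there exist T > 0 and c : ℕ → ℂ such that h(τ) ≠ 0 and f(τ) = Σ_{n≥0} c(n) e^{2πinτ} for all τ with Im τ > T. For B > 0 and s ∈ ℂ∖{0, k} define L*(s, B) := −c(0)·(B^s/s + i^k B^{s−k}/(k−s)) + ∫_B^∞ t^{s−1}(f(it) − c(0)) dt + i^k ∫_{1/B}^∞ t^{k−s−1}(f(it) − c(0)) dt. Then both integrals converge absolutely for every s ∈ ℂ, the value L*(s, B) does not depend on the choice of B > 0, and the functional equation L*(s, B) = i^k L*(k − s, 1/B) holds for all s ∈ ℂ∖{0, k}. -/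
/-!
On the imaginary axis the `q`-expansion gives `f(it) - c(0) = O(e^{-2πt})`, so both integrals
converge for every `s`. The transformation laws of `g` and `h` give `f(i/t) = i^k t^k f(it)`, and
the substitution `t ↦ 1/t` turns the second integrand over `[1/B', 1/B]` into `i^k` times the
first over `[B, B']`. As `i^{2k} = 1` for even `k`, moving `B` changes the two integrals by
amounts that are cancelled exactly by the elementary terms `-c(0)(B^s/s + i^k B^{s-k}/(k-s))`;
the functional equation is the same identity `i^{2k} = 1` applied to the definition of `L*`.
-/

open Complex Real Filter Topology MeasureTheory

/-- The regularized L-integral `L*(s, B)` of `f` with constant term `c0` and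
weight `k`, split at the reflection point `B`. -/
noncomputable def Lstar (f : ℂ → ℂ) (c0 : ℂ) (k : ℤ) (B : ℝ) (s : ℂ) : ℂ :=
  -c0 * ((B : ℂ) ^ s / s + I ^ k * (B : ℂ) ^ (s - (k : ℂ)) / ((k : ℂ) - s))
    + (∫ t in Set.Ioi B, (t : ℂ) ^ (s - 1) * (f (t * I) - c0))
    + I ^ k * ∫ t in Set.Ioi (1 / B), (t : ℂ) ^ ((k : ℂ) - s - 1) * (f (t * I) - c0)

open Set Asymptotics intervalIntegral

theorem Complex.I_zpow_mul_self_of_even {k : ℤ} (hk : Even k) : I ^ k * I ^ k = 1 := by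
  obtain ⟨m, rfl⟩ := hk
  rw [← zpow_add₀ I_ne_zero, show m + m + (m + m) = 4 * m by ring, zpow_mul]
  norm_num

theorem Complex.ofReal_inv_cpow {x : ℝ} (hx : 0 ≤ x) (w : ℂ) :
    ((x⁻¹ : ℝ) : ℂ) ^ w = (x : ℂ) ^ (-w) := by
  rw [ofReal_inv, inv_cpow_ofReal_nonneg hx, cpow_neg]

theorem integrableOn_Ioi_cpow_mul_of_isBigO_exp {F : ℝ → ℂ} {a B : ℝ} (ha : 0 < a)
    (hB : 0 < B) (hF : ContinuousOn F (Ici B))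
    (hdecay : F =O[atTop] fun t => Real.exp (-a * t)) (w : ℂ) :
    IntegrableOn (fun t : ℝ => (t : ℂ) ^ w * F t) (Ioi B) := by
  have hcont : ContinuousOn (fun t : ℝ => (t : ℂ) ^ w * F t) (Ici B) :=
    (continuous_ofReal.continuousOn.cpow_const fun t ht =>
      ofReal_mem_slitPlane.2 (hB.trans_le ht)).mul hF
  have hpow : (fun t : ℝ => (t : ℂ) ^ w) =O[atTop] fun t => Real.exp (a / 2 * t) := by
    refine IsBigO.trans ?_ (isLittleO_rpow_exp_pos_mul_atTop w.re (half_pos ha)).isBigO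
    refine IsBigO.of_bound 1 ((eventually_gt_atTop 0).mono fun t ht => ?_)
    rw [norm_cpow_eq_rpow_re_of_pos ht, Real.norm_of_nonneg (by positivity), one_mul]
  have hbound :
      (fun t : ℝ => (t : ℂ) ^ w * F t) =O[atTop] fun t => Real.exp (-(a / 2) * t) := by
    refine (hpow.mul hdecay).congr_right fun t => ?_
    rw [← Real.exp_add]; ring_nf
  rw [← integrableOn_Ici_iff_integrableOn_Ioi]
  exact (hcont.locallyIntegrableOn measurableSet_Ici).integrableOn_of_isBigO_atTop hbound
    ⟨Ioi 0, Ioi_mem_atTop 0, exp_neg_integrableOn_Ioi 0 (by positivity)⟩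

theorem intervalIntegral.integral_eq_integral_comp_inv {E : Type*} [NormedAddCommGroup E]
    [NormedSpace ℝ E] (G : ℝ → E) {a b : ℝ} (ha : 0 < a) (hb : 0 < b) :
    ∫ t in a⁻¹..b⁻¹, G t = ∫ u in b..a, (u ^ 2)⁻¹ • G u⁻¹ := by
  have hpos : ∀ x ∈ uIcc a b, 0 < x := fun x hx => (lt_min ha hb).trans_le hx.1
  rw [← integral_deriv_smul_comp_of_deriv_nonpos (f := fun x => x⁻¹) (f' := fun x => -(x ^ 2)⁻¹)
      (continuousOn_inv₀.mono fun x hx => (hpos x hx).ne')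
      (fun x hx => hasDerivAt_inv (hpos x (Ioo_subset_Icc_self hx)).ne')
      (fun x _ => neg_nonpos.2 (by positivity)),
    integral_symm, ← integral_neg]
  simp only [neg_smul, neg_neg, Function.comp_def]

theorem integral_ofReal_cpow_sub_one {a b : ℝ} (ha : 0 < a) (hb : 0 < b) {w : ℂ}
    (hw : w ≠ 0) :
    ∫ t in a..b, (t : ℂ) ^ (w - 1) = ((b : ℂ) ^ w - (a : ℂ) ^ w) / w := by
  rw [integral_cpow (Or.inr ⟨by simpa [sub_eq_iff_eq_add] using hw,
    fun h0 => (lt_min ha hb).not_ge h0.1⟩), sub_add_cancel]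

theorem integral_cpow_sub_one_mul_sub_const {φ : ℝ → ℂ} {a b : ℝ} (ha : 0 < a) (hb : 0 < b)
    (hφ : ContinuousOn φ (Ioi 0)) {w : ℂ} (hw : w ≠ 0) (c : ℂ) :
    ∫ t in a..b, (t : ℂ) ^ (w - 1) * (φ t - c) =
      (∫ t in a..b, (t : ℂ) ^ (w - 1) * φ t) - c * (((b : ℂ) ^ w - (a : ℂ) ^ w) / w) := by
  have hsub : uIcc a b ⊆ Ioi 0 := fun x hx => (lt_min ha hb).trans_le hx.1
  have hpow : ContinuousOn (fun t : ℝ => (t : ℂ) ^ (w - 1)) (Ioi 0) :=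
    continuous_ofReal.continuousOn.cpow_const fun t ht => ofReal_mem_slitPlane.2 ht
  have h₁ : IntervalIntegrable (fun t : ℝ => (t : ℂ) ^ (w - 1) * φ t) volume a b :=
    ((hpow.mul hφ).mono hsub).intervalIntegrable
  have h₂ : IntervalIntegrable (fun t : ℝ => c * (t : ℂ) ^ (w - 1)) volume a b :=
    ((continuousOn_const.mul hpow).mono hsub).intervalIntegrable
  simp_rw [mul_sub, mul_comm _ c]
  rw [integral_sub h₁ h₂, intervalIntegral.integral_const_mul,
    integral_ofReal_cpow_sub_one ha hb hw]

theorem cexp_two_pi_I_mul_mul_I (n : ℕ) (t : ℝ) :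
    cexp (2 * π * I * n * (t * I)) = (Real.exp (-(2 * π) * t) : ℂ) ^ n := by
  rw [ofReal_exp, ← Complex.exp_nat_mul]
  congr 1
  push_cast
  linear_combination (2 * π * n * t : ℂ) * I_sq

theorem exists_norm_tsum_mul_pow_sub_le {a : ℕ → ℂ} {q₀ : ℝ} (hq₀ : 0 < q₀)
    (hs : Summable fun n => ‖a n‖ * q₀ ^ n) :
    ∃ M, ∀ q : ℝ, 0 ≤ q → q ≤ q₀ → ‖∑' n, a n * (q : ℂ) ^ n - a 0‖ ≤ M * q := by
  have hs' : Summable fun n => ‖a (n + 1)‖ * q₀ ^ n := by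
    refine ((summable_nat_add_iff 1).2 hs |>.div_const q₀).congr fun n => ?_
    rw [pow_succ, ← mul_assoc, mul_div_cancel_right₀ _ hq₀.ne']
  refine ⟨∑' n, ‖a (n + 1)‖ * q₀ ^ n, fun q hq hqq₀ => ?_⟩
  have hterm (n : ℕ) : ‖a (n + 1) * (q : ℂ) ^ (n + 1)‖ ≤ ‖a (n + 1)‖ * q₀ ^ n * q := by
    rw [norm_mul, norm_pow, norm_real, Real.norm_of_nonneg hq, pow_succ, ← mul_assoc]
    exact mul_le_mul_of_nonneg_right
      (mul_le_mul_of_nonneg_left (pow_le_pow_left₀ hq hqq₀ n) (norm_nonneg _)) hq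
  have htail : Summable fun n => a (n + 1) * (q : ℂ) ^ (n + 1) :=
    (hs'.mul_right q).of_norm_bounded hterm
  have hsum : Summable fun n => a n * (q : ℂ) ^ n := (summable_nat_add_iff 1).1 htail
  rw [hsum.tsum_eq_zero_add, pow_zero, mul_one, add_sub_cancel_left, ← tsum_mul_right]
  exact (norm_tsum_le_tsum_norm htail.norm).trans
    (htail.norm.tsum_le_tsum hterm (hs'.mul_right q))

theorem isBigO_sub_coeff_zero_of_qExpansion {f : ℂ → ℂ} {c : ℕ → ℂ} {T : ℝ}
    (hexp : ∀ t : ℝ, T < t →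
      Summable (fun n : ℕ => ‖c n * cexp (2 * π * I * n * (t * I))‖) ∧
      f (t * I) = ∑' n : ℕ, c n * cexp (2 * π * I * n * (t * I))) :
    (fun t : ℝ => f (t * I) - c 0) =O[atTop] fun t => Real.exp (-(2 * π) * t) := by
  simp_rw [cexp_two_pi_I_mul_mul_I] at hexp
  set q : ℝ → ℝ := fun t => Real.exp (-(2 * π) * t)
  have hs : Summable fun n => ‖c n‖ * q (T + 1) ^ n := by
    refine (hexp (T + 1) (lt_add_one T)).1.congr fun n => ?_
    rw [norm_mul, norm_pow, norm_real, Real.norm_of_nonneg (Real.exp_pos _).le]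
  obtain ⟨M, hM⟩ := exists_norm_tsum_mul_pow_sub_le (Real.exp_pos _) hs
  refine IsBigO.of_bound M ((eventually_ge_atTop (T + 1)).mono fun t ht => ?_)
  rw [(hexp t (by linarith)).2, Real.norm_of_nonneg (Real.exp_pos _).le]
  refine hM (q t) (Real.exp_pos _).le (Real.exp_le_exp.2 ?_)
  nlinarith [pi_pos]

theorem IsModularForm.div_apply_inv_mul_I {k₁ k₂ : ℤ} {g h : ℂ → ℂ}
    (hg : IsModularForm k₁ g) (hh : IsModularForm k₂ h) {x : ℝ} (hx : 0 < x) :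
    g ((x⁻¹ : ℝ) * I) / h ((x⁻¹ : ℝ) * I) =
      I ^ (k₁ - k₂) * (x : ℂ) ^ (k₁ - k₂) * (g (x * I) / h (x * I)) := by
  have hz : (x : ℂ) * I ≠ 0 := mul_ne_zero (ofReal_ne_zero.2 hx.ne') I_ne_zero
  have him : 0 < ((x : ℂ) * I).im := by simpa using hx
  have hneg_inv : -((x : ℂ) * I)⁻¹ = ((x⁻¹ : ℝ) : ℂ) * I := by
    rw [mul_inv, inv_I]; push_cast; ring
  rw [← hneg_inv, hg.2.2.1 _ him, hh.2.2.1 _ him, mul_div_mul_comm, ← zpow_sub₀ hz, mul_zpow,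
    mul_comm ((x : ℂ) ^ _)]

theorem ContinuousOn.comp_ofReal_mul_I {f : ℂ → ℂ}
    (hf : ContinuousOn f {z : ℂ | 0 < z.im}) :
    ContinuousOn (fun t : ℝ => f (t * I)) (Ioi 0) :=
  hf.comp (continuous_ofReal.mul continuous_const).continuousOn fun t ht => by simpa using ht

section ImaginaryAxis

variable {f : ℂ → ℂ} {c₀ : ℂ} {k : ℤ} {a : ℝ}

theorem integral_inv_cpow_mul_eq_I_zpow_mul_integral
    (hinv : ∀ x : ℝ, 0 < x → f ((x⁻¹ : ℝ) * I) = I ^ k * (x : ℂ) ^ k * f (x * I))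
    {B B' : ℝ} (hB : 0 < B) (hB' : 0 < B') (s : ℂ) :
    ∫ t in B'⁻¹..B⁻¹, (t : ℂ) ^ ((k : ℂ) - s - 1) * f (t * I) =
      I ^ k * ∫ t in B..B', (t : ℂ) ^ (s - 1) * f (t * I) := by
  rw [integral_eq_integral_comp_inv _ hB' hB, ← intervalIntegral.integral_const_mul]
  refine intervalIntegral.integral_congr fun u hu => ?_
  have hu : 0 < u := (lt_min hB hB').trans_le hu.1
  have hu' : (u : ℂ) ≠ 0 := ofReal_ne_zero.2 hu.ne'
  have hpow :
      ((u : ℂ) ^ 2)⁻¹ * (u : ℂ) ^ (-((k : ℂ) - s - 1)) * (u : ℂ) ^ k = (u : ℂ) ^ (s - 1) := by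
    rw [← cpow_intCast, ← cpow_natCast, ← cpow_neg, ← cpow_add _ _ hu', ← cpow_add _ _ hu']
    push_cast
    ring_nf
  simp only [hinv u hu, ofReal_inv_cpow hu.le, real_smul]
  push_cast
  linear_combination I ^ k * f (u * I) * hpow

theorem integrableOn_Ioi_cpow_mul_sub_of_isBigO (ha : 0 < a)
    (hcont : ContinuousOn (fun t : ℝ => f (t * I)) (Ioi 0))
    (hdecay : (fun t : ℝ => f (t * I) - c₀) =O[atTop] fun t => Real.exp (-a * t))
    (w : ℂ) {B : ℝ} (hB : 0 < B) :
    IntegrableOn (fun t : ℝ => (t : ℂ) ^ w * (f (t * I) - c₀)) (Ioi B) :=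
  integrableOn_Ioi_cpow_mul_of_isBigO_exp ha hB
    ((hcont.sub continuousOn_const).mono fun _ ht => hB.trans_le ht) hdecay w

theorem Lstar_eq_Lstar_of_isBigO (ha : 0 < a)
    (hcont : ContinuousOn (fun t : ℝ => f (t * I)) (Ioi 0))
    (hdecay : (fun t : ℝ => f (t * I) - c₀) =O[atTop] fun t => Real.exp (-a * t))
    (hinv : ∀ x : ℝ, 0 < x → f ((x⁻¹ : ℝ) * I) = I ^ k * (x : ℂ) ^ k * f (x * I))
    (hk : Even k) {B B' : ℝ} (hB : 0 < B) (hB' : 0 < B') {s : ℂ} (hs : s ≠ 0) (hsk : s ≠ k) :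
    Lstar f c₀ k B s = Lstar f c₀ k B' s := by
  have hint := fun w {B : ℝ} (hB : 0 < B) =>
    integrableOn_Ioi_cpow_mul_sub_of_isBigO ha hcont hdecay w hB
  have hks : (k : ℂ) - s ≠ 0 := sub_ne_zero.2 hsk.symm
  set J := ∫ t in B..B', (t : ℂ) ^ (s - 1) * f (t * I)
  have h₁ : (∫ t in Ioi B, (t : ℂ) ^ (s - 1) * (f (t * I) - c₀)) -
      ∫ t in Ioi B', (t : ℂ) ^ (s - 1) * (f (t * I) - c₀) =
      J - c₀ * (((B' : ℂ) ^ s - (B : ℂ) ^ s) / s) := by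
    rw [intervalIntegral.integral_Ioi_sub_Ioi' (hint _ hB) (hint _ hB'),
      integral_cpow_sub_one_mul_sub_const hB hB' hcont hs]
  have h₂ : (∫ t in Ioi B'⁻¹, (t : ℂ) ^ ((k : ℂ) - s - 1) * (f (t * I) - c₀)) -
      ∫ t in Ioi B⁻¹, (t : ℂ) ^ ((k : ℂ) - s - 1) * (f (t * I) - c₀) =
      I ^ k * J - c₀ * (((B : ℂ) ^ (s - k) - (B' : ℂ) ^ (s - k)) / (k - s)) := by
    rw [intervalIntegral.integral_Ioi_sub_Ioi' (hint _ (inv_pos.2 hB')) (hint _ (inv_pos.2 hB)),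
      integral_cpow_sub_one_mul_sub_const (inv_pos.2 hB') (inv_pos.2 hB) hcont hks,
      integral_inv_cpow_mul_eq_I_zpow_mul_integral hinv hB hB', ofReal_inv_cpow hB.le,
      ofReal_inv_cpow hB'.le, neg_sub]
  simp only [Lstar, one_div]
  linear_combination h₁ - I ^ k * h₂ - J * I_zpow_mul_self_of_even hk

theorem Lstar_eq_I_zpow_mul_Lstar_one_div (hk : Even k) {B : ℝ} (hB : 0 ≤ B) (s : ℂ) :
    Lstar f c₀ k B s = I ^ k * Lstar f c₀ k (1 / B) ((k : ℂ) - s) := by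
  simp only [Lstar, one_div, inv_inv, ofReal_inv_cpow hB, neg_sub, sub_sub_cancel,
    sub_sub_cancel_left, neg_neg]
  linear_combination (c₀ * (B : ℂ) ^ s / s - ∫ t in Ioi B, (t : ℂ) ^ (s - 1) * (f (t * I) - c₀))
    * I_zpow_mul_self_of_even hk

end ImaginaryAxis

theorem stmt_10_general (k₁ k₂ k : ℤ) (g h f : ℂ → ℂ)
    (hg : IsModularForm k₁ g) (hh : IsModularForm k₂ h)
    (hk : k = k₁ - k₂) (hke : Even k)
    (hf : ∀ z : ℂ, f z = g z / h z)
    (haxis : ∀ t : ℝ, 0 < t → h (t * I) ≠ 0)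
    (T : ℝ) (c : ℕ → ℂ)
    (hcusp : ∀ τ : ℂ, T < τ.im → h τ ≠ 0 ∧
      Summable (fun n : ℕ => ‖c n * Complex.exp (2 * π * I * n * τ)‖) ∧
      f τ = ∑' n : ℕ, c n * Complex.exp (2 * π * I * n * τ)) :
    (∀ B : ℝ, 0 < B → ∀ s : ℂ,
      IntegrableOn (fun t : ℝ => (t : ℂ) ^ (s - 1) * (f (t * I) - c 0)) (Set.Ioi B) ∧
      IntegrableOn (fun t : ℝ =>
        (t : ℂ) ^ ((k : ℂ) - s - 1) * (f (t * I) - c 0)) (Set.Ioi (1 / B))) ∧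
    (∀ B B' : ℝ, 0 < B → 0 < B' → ∀ s : ℂ, s ≠ 0 → s ≠ (k : ℂ) →
      Lstar f (c 0) k B s = Lstar f (c 0) k B' s) ∧
    (∀ B : ℝ, 0 < B → ∀ s : ℂ, s ≠ 0 → s ≠ (k : ℂ) →
      Lstar f (c 0) k B s = I ^ k * Lstar f (c 0) k (1 / B) ((k : ℂ) - s)) := by
  have hcont : ContinuousOn (fun t : ℝ => f (t * I)) (Ioi 0) :=
    (hg.1.continuousOn.comp_ofReal_mul_I.div hh.1.continuousOn.comp_ofReal_mul_I haxis).congr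
      fun t _ => hf _
  have hdecay : (fun t : ℝ => f (t * I) - c 0) =O[atTop] fun t => Real.exp (-(2 * π) * t) :=
    isBigO_sub_coeff_zero_of_qExpansion fun t ht => (hcusp _ (by simpa using ht)).2
  have hinv : ∀ x : ℝ, 0 < x → f ((x⁻¹ : ℝ) * I) = I ^ k * (x : ℂ) ^ k * f (x * I) := by
    intro x hx
    simpa only [hf, hk] using hg.div_apply_inv_mul_I hh hx
  have h2π : 0 < 2 * π := by positivity
  refine ⟨fun B hB s => ⟨?_, ?_⟩, fun B B' hB hB' s hs hsk => ?_, fun B hB s _ _ => ?_⟩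
  · exact integrableOn_Ioi_cpow_mul_sub_of_isBigO h2π hcont hdecay _ hB
  · exact integrableOn_Ioi_cpow_mul_sub_of_isBigO h2π hcont hdecay _ (one_div_pos.2 hB)
  · exact Lstar_eq_Lstar_of_isBigO h2π hcont hdecay hinv hke hB hB' hs hsk
  · exact Lstar_eq_I_zpow_mul_Lstar_one_div hke hB.le s

/-- for a meromorphic modular form `f = g/h` of even weight `k`,
with no poles on the positive imaginary axis and regular at the cusp, the
regularized L-integral `L*(s, B)` is well-defined (absolutely convergent
integrals), independent of `B > 0`, and satisfies the functional equation
`L*(s, B) = i^k L*(k - s, 1/B)`. -/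
theorem stmt_10 (k₁ k₂ k : ℤ) (g h f : ℂ → ℂ)
    (hg : IsModularForm k₁ g) (hh : IsModularForm k₂ h)
    (hhne : ∃ z : ℂ, 0 < z.im ∧ h z ≠ 0)
    (hk : k = k₁ - k₂) (hke : Even k)
    (hf : ∀ z : ℂ, f z = g z / h z)
    (haxis : ∀ t : ℝ, 0 < t → h (t * I) ≠ 0)
    (T : ℝ) (hT : 0 < T) (c : ℕ → ℂ)
    (hcusp : ∀ τ : ℂ, T < τ.im → h τ ≠ 0 ∧
      Summable (fun n : ℕ => ‖c n * Complex.exp (2 * π * I * n * τ)‖) ∧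
      f τ = ∑' n : ℕ, c n * Complex.exp (2 * π * I * n * τ)) :
    (∀ B : ℝ, 0 < B → ∀ s : ℂ,
      IntegrableOn (fun t : ℝ => (t : ℂ) ^ (s - 1) * (f (t * I) - c 0)) (Set.Ioi B) ∧
      IntegrableOn (fun t : ℝ =>
        (t : ℂ) ^ ((k : ℂ) - s - 1) * (f (t * I) - c 0)) (Set.Ioi (1 / B))) ∧
    (∀ B B' : ℝ, 0 < B → 0 < B' → ∀ s : ℂ, s ≠ 0 → s ≠ (k : ℂ) →
      Lstar f (c 0) k B s = Lstar f (c 0) k B' s) ∧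
    (∀ B : ℝ, 0 < B → ∀ s : ℂ, s ≠ 0 → s ≠ (k : ℂ) →
      Lstar f (c 0) k B s = I ^ k * Lstar f (c 0) k (1 / B) ((k : ℂ) - s)) :=
  stmt_10_general k₁ k₂ k g h f hg hh hk hke hf haxis T c hcusp
end

section
/- Let g and h be level-one holomorphic modular forms of weights k₁ and k₂ with h not identically zero, and define F : ℂ → ℂ by F(τ) = g(τ)/h(τ) for Im τ > 0 and F(τ) = 0 otherwise. Suppose F vanishes at the cusp: there exist T > 0 and c : ℕ → ℂ such that h(τ) ≠ 0 and F(τ) = Σ_{n≥1} c(n) e^{2πinτ} (absolutely convergent) for all τ with Im τ > T. Then for every natural number Δ there exists t* > 0 such that F is complex-differentiable to all orders at iτ for every purely imaginary point it with 0 < t < t*, and the Δ-th complex derivative satisfies F^{(Δ)}(it) → 0 as t → 0⁺. -/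
/-!
The quotient `F = g / h` has weight `k₂ - k₁`: `F w = w ^ (k₂ - k₁) * F (-w⁻¹)`. On the disc of
radius `t / 2` about `it` we have `Im (-w⁻¹) ≥ 2 / (9 t)`, so for small `t` the function `h` does
not vanish there, and the vanishing of `F` at the cusp gives
`‖F w‖ ≤ C (2 / t) ^ |k₂ - k₁| e ^ (-4π / (9 t))`. Cauchy's estimate on that disc then bounds
`‖F^(Δ)(it)‖` by `Δ! C (2 / t) ^ (|k₂ - k₁| + Δ) e ^ (-4π / (9 t))`, which tends to `0` as `t → 0⁺`.
-/

open Complex Real Filter Topology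

open Metric

lemma norm_mul_exp_two_pi_I_mul (a : ℂ) (n : ℕ) (τ : ℂ) :
    ‖a * Complex.exp (2 * π * I * ((n : ℂ) + 1) * τ)‖ =
      ‖a‖ * Real.exp (-(2 * π * (n + 1) * τ.im)) := by
  rw [norm_mul, Complex.norm_exp]
  simp [Complex.mul_re, Complex.mul_im]

lemma exists_norm_le_mul_exp_of_eq_tsum (F : ℂ → ℂ) (T : ℝ) (c : ℕ → ℂ)
    (hF : ∀ τ : ℂ, T < τ.im →
      Summable (fun n : ℕ => ‖c (n + 1) * Complex.exp (2 * π * I * ((n : ℂ) + 1) * τ)‖) ∧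
      F τ = ∑' n : ℕ, c (n + 1) * Complex.exp (2 * π * I * ((n : ℂ) + 1) * τ)) :
    ∃ C : ℝ, 0 ≤ C ∧ ∀ τ : ℂ, T + 1 ≤ τ.im → ‖F τ‖ ≤ C * Real.exp (-(2 * π * τ.im)) := by
  set τ₀ : ℂ := ((T + 1 : ℝ) : ℂ) * I
  have hτ₀ : τ₀.im = T + 1 := by simp [τ₀]
  obtain ⟨hsum₀, -⟩ := hF τ₀ (by linarith)
  set S := ∑' n : ℕ, ‖c (n + 1) * Complex.exp (2 * π * I * ((n : ℂ) + 1) * τ₀)‖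
  refine ⟨S * Real.exp (2 * π * (T + 1)), by positivity, fun τ hτ => ?_⟩
  obtain ⟨hsum, hFτ⟩ := hF τ (by linarith)
  have hterm : ∀ n : ℕ, ‖c (n + 1) * Complex.exp (2 * π * I * ((n : ℂ) + 1) * τ)‖ ≤
      ‖c (n + 1) * Complex.exp (2 * π * I * ((n : ℂ) + 1) * τ₀)‖ *
        Real.exp (-(2 * π * (τ.im - (T + 1)))) := by
    intro n
    rw [norm_mul_exp_two_pi_I_mul, norm_mul_exp_two_pi_I_mul, hτ₀, mul_assoc ‖c (n + 1)‖,
      ← Real.exp_add]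
    gcongr
    nlinarith [mul_nonneg (mul_nonneg pi_pos.le (Nat.cast_nonneg n)) (sub_nonneg.2 hτ)]
  calc ‖F τ‖ ≤ ∑' n : ℕ, ‖c (n + 1) * Complex.exp (2 * π * I * ((n : ℂ) + 1) * τ)‖ :=
        hFτ ▸ norm_tsum_le_tsum_norm hsum
    _ ≤ S * Real.exp (-(2 * π * (τ.im - (T + 1)))) := by
        rw [← tsum_mul_right]; exact hsum.tsum_le_tsum hterm (hsum₀.mul_right _)
    _ = S * Real.exp (2 * π * (T + 1)) * Real.exp (-(2 * π * τ.im)) := by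
        rw [mul_assoc S, ← Real.exp_add]; ring_nf

lemma half_le_im_of_mem_closedBall_I_mul {t : ℝ} {w : ℂ}
    (hw : w ∈ closedBall ((t : ℂ) * I) (t / 2)) : t / 2 ≤ w.im := by
  have h := (abs_im_le_norm (w - t * I)).trans (mem_closedBall_iff_norm.1 hw)
  simp only [sub_im, mul_im, ofReal_re, I_im, ofReal_im, I_re] at h
  linarith [(abs_le.1 h).1]

lemma norm_le_of_mem_closedBall_I_mul {t : ℝ} (ht : 0 ≤ t) {w : ℂ}
    (hw : w ∈ closedBall ((t : ℂ) * I) (t / 2)) : ‖w‖ ≤ 3 * t / 2 := by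
  have h := norm_le_norm_add_norm_sub' w ((t : ℂ) * I)
  rw [norm_mul, norm_I, norm_real, Real.norm_of_nonneg ht] at h
  linarith [mem_closedBall_iff_norm.1 hw]

lemma im_neg_inv (w : ℂ) : (-w⁻¹).im = w.im / ‖w‖ ^ 2 := by
  rw [neg_im, inv_im, normSq_eq_norm_sq, neg_div, neg_neg]

lemma le_im_neg_inv_of_mem_closedBall_I_mul {t : ℝ} (ht : 0 < t) {w : ℂ}
    (hw : w ∈ closedBall ((t : ℂ) * I) (t / 2)) : 2 / 9 / t ≤ (-w⁻¹).im := by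
  have him := half_le_im_of_mem_closedBall_I_mul hw
  have hnorm : ‖w‖ ≤ 3 * t / 2 := norm_le_of_mem_closedBall_I_mul ht.le hw
  have hpos : 0 < ‖w‖ := (by positivity : 0 < t / 2).trans_le (him.trans (im_le_norm w))
  rw [im_neg_inv, div_div, div_le_div_iff₀ (by positivity) (by positivity)]
  nlinarith

lemma zpow_le_pow_natAbs {x a : ℝ} (hx : 0 < x) (hxa : x ≤ a) (hax : a⁻¹ ≤ x) (m : ℤ) :
    x ^ m ≤ a ^ m.natAbs := by
  rcases Int.natAbs_eq m with hm | hm <;> rw [hm]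
  · rw [zpow_natCast, Int.natAbs_natCast]
    exact pow_le_pow_left₀ hx.le hxa _
  · rw [zpow_neg, zpow_natCast, Int.natAbs_neg, Int.natAbs_natCast, ← inv_pow]
    exact pow_le_pow_left₀ (inv_nonneg.2 hx.le) (inv_le_of_inv_le₀ (hx.trans_le hxa) hax) _

lemma tendsto_div_pow_mul_exp_neg_div (a : ℝ) (P : ℕ) {b : ℝ} (hb : 0 < b) :
    Tendsto (fun t : ℝ => (a / t) ^ P * Real.exp (-b / t)) (𝓝[>] 0) (𝓝 0) := by
  have h := ((tendsto_rpow_mul_exp_neg_mul_atTop_nhds_zero P b hb).comp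
    tendsto_inv_nhdsGT_zero).const_mul (a ^ P)
  rw [mul_zero] at h
  refine h.congr fun t => ?_
  simp only [Function.comp_apply, rpow_natCast, div_eq_mul_inv, mul_pow, neg_mul]
  ring

lemma ne_zero_of_im_pos {z : ℂ} (hz : 0 < z.im) : z ≠ 0 :=
  fun h0 => by simp [h0] at hz

lemma im_neg_inv_pos {w : ℂ} (hw : 0 < w.im) : 0 < (-w⁻¹).im := by
  have := ne_zero_of_im_pos hw
  rw [im_neg_inv]; positivity

lemma eq_zpow_mul_apply_neg_inv_of_eq_div {k₁ k₂ : ℤ} {g h F : ℂ → ℂ}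
    (hg : ∀ z : ℂ, 0 < z.im → g (-z⁻¹) = z ^ k₁ * g z)
    (hh : ∀ z : ℂ, 0 < z.im → h (-z⁻¹) = z ^ k₂ * h z)
    (hF : ∀ τ : ℂ, F τ = if 0 < τ.im then g τ / h τ else 0)
    {w : ℂ} (hw : 0 < w.im) : F w = w ^ (k₂ - k₁) * F (-w⁻¹) := by
  have hw0 := ne_zero_of_im_pos hw
  rw [hF, hF, if_pos hw, if_pos (im_neg_inv_pos hw), hg w hw, hh w hw, mul_div_mul_comm,
    ← mul_assoc, ← zpow_sub₀ hw0, ← zpow_add₀ hw0, sub_add_sub_cancel', sub_self, zpow_zero,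
    one_mul]

lemma apply_ne_zero_of_apply_neg_inv_ne_zero {k : ℤ} {f : ℂ → ℂ}
    (hf : ∀ z : ℂ, 0 < z.im → f (-z⁻¹) = z ^ k * f z) {w : ℂ} (hw : 0 < w.im)
    (hfw : f (-w⁻¹) ≠ 0) : f w ≠ 0 := by
  have h := hf (-w⁻¹) (im_neg_inv_pos hw)
  rw [inv_neg, inv_inv, neg_neg] at h
  rw [h]
  exact mul_ne_zero (zpow_ne_zero _ (ne_zero_of_im_pos (im_neg_inv_pos hw))) hfw

lemma ne_zero_of_mem_closedBall_I_mul {k : ℤ} {f : ℂ → ℂ}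
    (hf : ∀ z : ℂ, 0 < z.im → f (-z⁻¹) = z ^ k * f z) {T : ℝ}
    (hne : ∀ τ : ℂ, T < τ.im → f τ ≠ 0) {t : ℝ} (ht : 0 < t) (hT : T < 2 / 9 / t) {w : ℂ}
    (hw : w ∈ closedBall ((t : ℂ) * I) (t / 2)) : f w ≠ 0 :=
  apply_ne_zero_of_apply_neg_inv_ne_zero hf
    ((half_pos ht).trans_le (half_le_im_of_mem_closedBall_I_mul hw))
    (hne _ (hT.trans_le (le_im_neg_inv_of_mem_closedBall_I_mul ht hw)))

lemma norm_le_of_mem_closedBall_I_mul_of_eq_div {k₁ k₂ : ℤ} {g h F : ℂ → ℂ}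
    (hg : ∀ z : ℂ, 0 < z.im → g (-z⁻¹) = z ^ k₁ * g z)
    (hh : ∀ z : ℂ, 0 < z.im → h (-z⁻¹) = z ^ k₂ * h z)
    (hF : ∀ τ : ℂ, F τ = if 0 < τ.im then g τ / h τ else 0) {C T : ℝ} (hC0 : 0 ≤ C)
    (hC : ∀ τ : ℂ, T ≤ τ.im → ‖F τ‖ ≤ C * Real.exp (-(2 * π * τ.im)))
    {t : ℝ} (ht : 0 < t) (ht1 : t ≤ 1) (hT : T ≤ 2 / 9 / t) {w : ℂ}
    (hw : w ∈ closedBall ((t : ℂ) * I) (t / 2)) :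
    ‖F w‖ ≤ (2 / t) ^ (k₂ - k₁).natAbs * (C * Real.exp (-(4 * π / 9) / t)) := by
  have him := half_le_im_of_mem_closedBall_I_mul hw
  have hnorm := norm_le_of_mem_closedBall_I_mul ht.le hw
  have hinv := le_im_neg_inv_of_mem_closedBall_I_mul ht hw
  have hw_im : 0 < w.im := (half_pos ht).trans_le him
  have hzpow : ‖w‖ ^ (k₂ - k₁) ≤ (2 / t) ^ (k₂ - k₁).natAbs := by
    refine zpow_le_pow_natAbs (hw_im.trans_le (im_le_norm w)) (hnorm.trans ?_) ?_ _
    · rw [le_div_iff₀ ht]; nlinarith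
    · rw [inv_div]; exact him.trans (im_le_norm w)
  have hcusp : ‖F (-w⁻¹)‖ ≤ C * Real.exp (-(4 * π / 9) / t) := by
    refine (hC _ (hT.trans hinv)).trans ?_
    gcongr
    rw [neg_div, neg_le_neg_iff]
    calc 4 * π / 9 / t = 2 * π * (2 / 9 / t) := by ring
      _ ≤ 2 * π * (-w⁻¹).im := by gcongr
  rw [eq_zpow_mul_apply_neg_inv_of_eq_div hg hh hF hw_im, norm_mul, norm_zpow]
  exact mul_le_mul hzpow hcusp (norm_nonneg _) (by positivity)

theorem stmt_11_general (k₁ k₂ : ℤ) (g h : ℂ → ℂ)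
    (hg : IsModularForm k₁ g) (hh : IsModularForm k₂ h)
    (F : ℂ → ℂ) (hF : ∀ τ : ℂ, F τ = if 0 < τ.im then g τ / h τ else 0)
    (T : ℝ) (hT : 0 < T) (c : ℕ → ℂ)
    (hcusp : ∀ τ : ℂ, T < τ.im → h τ ≠ 0 ∧
      Summable (fun n : ℕ => ‖c (n + 1) * Complex.exp (2 * π * I * ((n : ℂ) + 1) * τ)‖) ∧
      F τ = ∑' n : ℕ, c (n + 1) * Complex.exp (2 * π * I * ((n : ℂ) + 1) * τ))
    (Δ : ℕ) :
    ∃ tstar : ℝ, 0 < tstar ∧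
      (∀ t : ℝ, 0 < t → t < tstar →
        ∀ n : ℕ, DifferentiableAt ℂ (iteratedDeriv n F) ((t : ℂ) * I)) ∧
      Tendsto (fun t : ℝ => iteratedDeriv Δ F ((t : ℂ) * I))
        (nhdsWithin 0 (Set.Ioi 0)) (nhds 0) := by
  obtain ⟨C, hC0, hC⟩ := exists_norm_le_mul_exp_of_eq_tsum F T c fun τ hτ => (hcusp τ hτ).2
  set V : Set ℂ := {z | 0 < z.im} ∩ h ⁻¹' {0}ᶜ
  have hV : IsOpen V := hh.1.continuousOn.isOpen_inter_preimage
    (isOpen_lt continuous_const continuous_im) isOpen_compl_singleton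
  have hFV : DifferentiableOn ℂ F V :=
    ((hg.1.mono Set.inter_subset_left).div (hh.1.mono Set.inter_subset_left)
      fun z hz => hz.2).congr fun z hz => (hF z).trans (if_pos hz.1)
  set tstar := min 1 (2 / 9 / (T + 1))
  have hsmall : ∀ t, 0 < t → t < tstar → t ≤ 1 ∧ T + 1 < 2 / 9 / t := fun t ht hts =>
    ⟨(lt_min_iff.1 hts).1.le, (lt_div_comm₀ ht (by positivity)).1 (lt_min_iff.1 hts).2⟩
  have hball : ∀ t, 0 < t → t < tstar → closedBall ((t : ℂ) * I) (t / 2) ⊆ V :=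
    fun t ht hts w hw => ⟨(half_pos ht).trans_le (half_le_im_of_mem_closedBall_I_mul hw),
      ne_zero_of_mem_closedBall_I_mul hh.2.2.1 (fun τ hτ => (hcusp τ hτ).1) ht
        (by linarith [(hsmall t ht hts).2]) hw⟩
  refine ⟨tstar, by positivity, fun t ht hts n => ?_, ?_⟩
  · have hFt := hFV.analyticOnNhd hV _ (hball t ht hts (mem_closedBall_self (half_pos ht).le))
    rw [iteratedDeriv_eq_iterate]
    exact (hFt.iterated_deriv n).differentiableAt
  · have hlim := (tendsto_div_pow_mul_exp_neg_div 2 ((k₂ - k₁).natAbs + Δ)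
      (by positivity : 0 < 4 * π / 9)).const_mul (Δ.factorial * C)
    rw [mul_zero] at hlim
    refine squeeze_zero_norm' ?_ hlim
    filter_upwards [Ioo_mem_nhdsGT (by positivity : 0 < tstar)] with t ⟨ht, hts⟩
    calc ‖iteratedDeriv Δ F (t * I)‖
        ≤ Δ.factorial * ((2 / t) ^ (k₂ - k₁).natAbs * (C * Real.exp (-(4 * π / 9) / t))) /
            (t / 2) ^ Δ :=
          norm_iteratedDeriv_le_of_forall_mem_sphere_norm_le Δ (half_pos ht)
            (hFV.diffContOnCl_ball (hball t ht hts)) fun w hw =>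
              norm_le_of_mem_closedBall_I_mul_of_eq_div hg.2.2.1 hh.2.2.1 hF hC0 hC ht
                (hsmall t ht hts).1 (hsmall t ht hts).2.le (sphere_subset_closedBall hw)
      _ = Δ.factorial * C *
            ((2 / t) ^ ((k₂ - k₁).natAbs + Δ) * Real.exp (-(4 * π / 9) / t)) := by
          rw [show t / 2 = (2 / t)⁻¹ by rw [inv_div], inv_pow, div_inv_eq_mul, pow_add]
          ring

/-- if `F = g/h` (a quotient of level-one holomorphic modular forms,
extended by `0` off the upper half-plane) vanishes at the cusp, then for every `Δ`
all complex derivatives of `F` exist at `it` for small `t > 0` and the `Δ`-th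
derivative tends to `0` as `t → 0⁺`. -/
theorem stmt_11 (k₁ k₂ : ℤ) (g h : ℂ → ℂ)
    (hg : IsModularForm k₁ g) (hh : IsModularForm k₂ h)
    (hhne : ∃ z : ℂ, 0 < z.im ∧ h z ≠ 0)
    (F : ℂ → ℂ) (hF : ∀ τ : ℂ, F τ = if 0 < τ.im then g τ / h τ else 0)
    (T : ℝ) (hT : 0 < T) (c : ℕ → ℂ)
    (hcusp : ∀ τ : ℂ, T < τ.im → h τ ≠ 0 ∧
      Summable (fun n : ℕ => ‖c (n + 1) * Complex.exp (2 * π * I * ((n : ℂ) + 1) * τ)‖) ∧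
      F τ = ∑' n : ℕ, c (n + 1) * Complex.exp (2 * π * I * ((n : ℂ) + 1) * τ))
    (Δ : ℕ) :
    ∃ tstar : ℝ, 0 < tstar ∧
      (∀ t : ℝ, 0 < t → t < tstar →
        ∀ n : ℕ, DifferentiableAt ℂ (iteratedDeriv n F) ((t : ℂ) * I)) ∧
      Tendsto (fun t : ℝ => iteratedDeriv Δ F ((t : ℂ) * I))
        (nhdsWithin 0 (Set.Ioi 0)) (nhds 0) :=
  stmt_11_general k₁ k₂ g h hg hh F hF T hT c hcusp Δ
end
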